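/- arXiv:1906.11378 — 7 statements merged into one kernel-verified Lean document; each statement's English description precedes it below -/
import Mathlib

section
/- Let N, m be positive integers and consider the block space (ℝ^m)^N, with (w)_t ∈ ℝ^m denoting the t-th block of w. For each t ∈ {1, …, N} let n_t be a positive integer, let M_t : (ℝ^m)^N → ℝ^{n_t} be a linear map satisfying ‖(w)_t‖ ≤ ‖M_t w‖ for every w ∈ (ℝ^m)^N, and let f_t : ℝ^{n_t} → ℝ be differentiable and μ-strongly convex (μ > 0). Let G : (ℝ^m)^N → ℝ be convex. Then the function w ↦ Σ_{t=1}^N f_t(M_t w) + G(w) is μ-strongly convex on (ℝ^m)^N. -/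
/-!
Against the chord between `x` and `y` with weights `a, b`, each `f t ∘ M t` gains at least
`a b μ/2 ‖M t (x - y)‖² ≥ a b μ/2 ‖(x - y)_t‖²`. Over the blocks these gains add up to
`a b μ/2 ‖x - y‖²`, and adding the convex `G` loses nothing.
-/

open Finset

theorem strongConvexOn_univ_of_add_inner_le {E : Type*} [NormedAddCommGroup E]
    [InnerProductSpace ℝ E] {μ : ℝ} {f : E → ℝ} (g : E → E)
    (hf : ∀ x y, f x + inner ℝ (g x) (y - x) + μ / 2 * ‖y - x‖ ^ 2 ≤ f y) :
    StrongConvexOn Set.univ μ f := by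
  refine ⟨convex_univ, fun x _ y _ a b ha hb hab => ?_⟩
  obtain rfl : b = 1 - a := eq_sub_of_add_eq' hab
  -- Use both minorants at `p`: their linear terms cancel as `a • (x - p) + b • (y - p) = 0`.
  set p := a • x + (1 - a) • y
  have hx := hf p x
  have hy := hf p y
  rw [show x - p = (1 - a) • (x - y) by module, norm_smul, Real.norm_of_nonneg hb,
    real_inner_smul_right] at hx
  rw [show y - p = -(a • (x - y)) by module, norm_neg, inner_neg_right, norm_smul,
    Real.norm_of_nonneg ha, real_inner_smul_right] at hy
  simp only [smul_eq_mul]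
  nlinarith [mul_le_mul_of_nonneg_left hx ha, mul_le_mul_of_nonneg_left hy hb]

theorem StrongConvexOn.add_convexOn {E : Type*} [NormedAddCommGroup E] [NormedSpace ℝ E]
    {s : Set E} {μ : ℝ} {f g : E → ℝ} (hf : StrongConvexOn s μ f) (hg : ConvexOn ℝ s g) :
    StrongConvexOn s μ (f + g) := by
  have h := hf.add hg.uniformConvexOn_zero
  rwa [add_zero] at h

theorem StrongConvexOn.sum_comp_of_norm_apply_le {ι : Type*} [Fintype ι] {β : ι → Type*}
    [∀ i, NormedAddCommGroup (β i)] [∀ i, NormedSpace ℝ (β i)]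
    {F : ι → Type*} [∀ i, NormedAddCommGroup (F i)] [∀ i, NormedSpace ℝ (F i)]
    {μ : ℝ} (hμ : 0 ≤ μ) {f : ∀ i, F i → ℝ} (hf : ∀ i, StrongConvexOn Set.univ μ (f i))
    (M : ∀ i, PiLp 2 β →ₗ[ℝ] F i) (hM : ∀ i w, ‖w i‖ ≤ ‖M i w‖) :
    StrongConvexOn Set.univ μ (fun w => ∑ i, f i (M i w)) := by
  refine ⟨convex_univ, fun x _ y _ a b ha hb hab => ?_⟩
  have hblock : ∀ i, f i (M i (a • x + b • y))
      ≤ a * f i (M i x) + b * f i (M i y) - a * b * (μ / 2 * ‖(x - y) i‖ ^ 2) := fun i =>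
    calc f i (M i (a • x + b • y)) = f i (a • M i x + b • M i y) := by simp
      _ ≤ a * f i (M i x) + b * f i (M i y) - a * b * (μ / 2 * ‖M i x - M i y‖ ^ 2) :=
        (hf i).2 trivial trivial ha hb hab
      _ ≤ _ := by
        rw [← map_sub]
        have := hM i (x - y)
        gcongr
  calc ∑ i, f i (M i (a • x + b • y))
      ≤ ∑ i, (a * f i (M i x) + b * f i (M i y) - a * b * (μ / 2 * ‖(x - y) i‖ ^ 2)) :=
        sum_le_sum fun i _ => hblock i
    _ = a • ∑ i, f i (M i x) + b • ∑ i, f i (M i y) - a * b * (μ / 2 * ‖x - y‖ ^ 2) := by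
        simp only [sum_sub_distrib, sum_add_distrib, ← mul_sum, PiLp.norm_sq_eq_of_L2,
          smul_eq_mul]

theorem stmt_1_general {N m : ℕ} (μ : ℝ) (hμ : 0 < μ)
    (n : Fin N → ℕ)
    (M : (t : Fin N) →
      (PiLp 2 fun _ : Fin N => EuclideanSpace ℝ (Fin m)) →ₗ[ℝ] EuclideanSpace ℝ (Fin (n t)))
    (hM : ∀ (t : Fin N) (w : PiLp 2 fun _ : Fin N => EuclideanSpace ℝ (Fin m)),
      ‖w t‖ ≤ ‖M t w‖)
    (f : (t : Fin N) → EuclideanSpace ℝ (Fin (n t)) → ℝ)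
    (hsc : ∀ (t : Fin N) (x y : EuclideanSpace ℝ (Fin (n t))),
      f t x + (inner ℝ (gradient (f t) x) (y - x) : ℝ) + μ / 2 * ‖y - x‖ ^ 2 ≤ f t y)
    (G : (PiLp 2 fun _ : Fin N => EuclideanSpace ℝ (Fin m)) → ℝ)
    (hG : ConvexOn ℝ Set.univ G) :
    StrongConvexOn Set.univ μ (fun w => (∑ t : Fin N, f t (M t w)) + G w) := by
  have hf : ∀ t, StrongConvexOn Set.univ μ (f t) := fun t =>
    strongConvexOn_univ_of_add_inner_le (gradient (f t)) (hsc t)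
  exact (StrongConvexOn.sum_comp_of_norm_apply_le hμ.le hf M hM).add_convexOn hG

/-- Strong-convexity half of Lemma 1(i): if each `f t` is differentiable and `μ`-strongly
convex, each linear map `M t` satisfies `‖(w)_t‖ ≤ ‖M t w‖`, and `G` is convex, then
`w ↦ ∑ t, f t (M t w) + G w` is `μ`-strongly convex on the block space `(ℝ^m)^N`. -/
theorem stmt_1 {N m : ℕ} (hN : 0 < N) (hm : 0 < m) (μ : ℝ) (hμ : 0 < μ)
    (n : Fin N → ℕ)
    (M : (t : Fin N) →
      (PiLp 2 fun _ : Fin N => EuclideanSpace ℝ (Fin m)) →ₗ[ℝ] EuclideanSpace ℝ (Fin (n t)))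
    (hM : ∀ (t : Fin N) (w : PiLp 2 fun _ : Fin N => EuclideanSpace ℝ (Fin m)),
      ‖w t‖ ≤ ‖M t w‖)
    (f : (t : Fin N) → EuclideanSpace ℝ (Fin (n t)) → ℝ)
    (hdiff : ∀ t, Differentiable ℝ (f t))
    (hsc : ∀ (t : Fin N) (x y : EuclideanSpace ℝ (Fin (n t))),
      f t x + (inner ℝ (gradient (f t) x) (y - x) : ℝ) + μ / 2 * ‖y - x‖ ^ 2 ≤ f t y)
    (G : (PiLp 2 fun _ : Fin N => EuclideanSpace ℝ (Fin m)) → ℝ)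
    (hG : ConvexOn ℝ Set.univ G) :
    StrongConvexOn Set.univ μ (fun w => (∑ t : Fin N, f t (M t w)) + G w) :=
  stmt_1_general μ hμ n M hM f hsc G hG
end

section
/- Let N, m, T be positive integers and consider the block space (ℝ^m)^N, with (w)_s ∈ ℝ^m denoting the s-th block of w. For each t ∈ {1, …, T} let S_t ⊆ {1, …, N} be an index set, and suppose every index s ∈ {1, …, N} belongs to at most p of the sets S_1, …, S_T. For each t let M_t : (ℝ^m)^N → ℝ^{n_t} be a linear map satisfying ‖M_t w‖² ≤ Σ_{s ∈ S_t} ‖(w)_s‖² for every w, and let f_t : ℝ^{n_t} → ℝ be differentiable with l-Lipschitz gradient (l > 0). Then C(w) = Σ_{t=1}^T f_t(M_t w) satisfies C(w') ≤ C(w) + ⟨∇C(w), w'−w⟩ + (p·l/2)‖w'−w‖² for all w, w'; in particular C is p·l-smooth. -/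
/-!
Each `f t` satisfies the descent inequality `f b ≤ f a + ⟪∇f a, b - a⟫ + l/2 ‖b - a‖²`, because
the derivative of `τ ↦ f (a + τ • v)` grows at rate at most `l ‖v‖²`. Applying it at `M t w` and
`M t w'` and summing over `t`, the linear terms add up to `⟪∇C w, w' - w⟫` and the quadratic
terms to `l/2 ∑ₜ ‖M t (w' - w)‖²`. Summing the bounds `‖M t u‖² ≤ ∑_{s ∈ S t} ‖u s‖²` counts
every block at most `p` times, so this is at most `p l/2 ‖w' - w‖²`.
-/

open NNReal

theorem le_add_fderiv_add_of_lipschitzWith_fderiv {E : Type*} [NormedAddCommGroup E]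
    [NormedSpace ℝ E] {f : E → ℝ} {L : ℝ≥0}
    (hf : Differentiable ℝ f) (hlip : LipschitzWith L (fderiv ℝ f)) (x y : E) :
    f y ≤ f x + fderiv ℝ f x (y - x) + L / 2 * ‖y - x‖ ^ 2 := by
  obtain ⟨v, rfl⟩ : ∃ v, y = x + v := ⟨y - x, (add_sub_cancel x y).symm⟩
  rw [add_sub_cancel_left]
  -- `h` is antitone on `τ ≥ 0`, and `h 1 ≤ h 0` is the claim.
  let h : ℝ → ℝ := fun τ => f (x + τ • v) - τ * fderiv ℝ f x v - L / 2 * τ ^ 2 * ‖v‖ ^ 2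
  have hderiv (τ : ℝ) : HasDerivAt h
      (fderiv ℝ f (x + τ • v) v - fderiv ℝ f x v - L * τ * ‖v‖ ^ 2) τ := by
    have hline : HasDerivAt (fun τ : ℝ => x + τ • v) v τ :=
      ((hasDerivAt_id τ).smul_const v).const_add x |>.congr_deriv (one_smul ℝ v)
    have := (((hf _).hasFDerivAt.comp_hasDerivAt τ hline).sub
      ((hasDerivAt_id τ).mul_const (fderiv ℝ f x v))).sub
      (((hasDerivAt_pow 2 τ).const_mul (L / 2 : ℝ)).mul_const (‖v‖ ^ 2))
    exact this.congr_deriv (by rw [show 2 - 1 = 1 from rfl]; push_cast; ring)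
  have hslope {τ : ℝ} (hτ : 0 ≤ τ) :
      fderiv ℝ f (x + τ • v) v - fderiv ℝ f x v ≤ L * τ * ‖v‖ ^ 2 :=
    calc fderiv ℝ f (x + τ • v) v - fderiv ℝ f x v
        = (fderiv ℝ f (x + τ • v) - fderiv ℝ f x) v := rfl
      _ ≤ ‖fderiv ℝ f (x + τ • v) - fderiv ℝ f x‖ * ‖v‖ := (Real.le_norm_self _).trans
          (ContinuousLinearMap.le_opNorm _ _)
      _ ≤ L * ‖τ • v‖ * ‖v‖ := by
          gcongr
          simpa [dist_eq_norm] using hlip.dist_le_mul (x + τ • v) x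
      _ = L * τ * ‖v‖ ^ 2 := by rw [norm_smul, Real.norm_of_nonneg hτ]; ring
  have hanti : AntitoneOn h (Set.Ici 0) :=
    antitoneOn_of_hasDerivWithinAt_nonpos (convex_Ici 0)
      (fun τ _ => (hderiv τ).continuousAt.continuousWithinAt)
      (fun τ _ => (hderiv τ).hasDerivWithinAt)
      (fun τ hτ => by
        rw [interior_Ici] at hτ
        linarith [hslope hτ.le])
  have := hanti Set.self_mem_Ici (Set.mem_Ici.mpr zero_le_one) zero_le_one
  simp [h] at this
  linarith

theorem lipschitzWith_fderiv_iff_lipschitzWith_gradient {F : Type*} [NormedAddCommGroup F]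
    [InnerProductSpace ℝ F] [CompleteSpace F] {f : F → ℝ} {K : ℝ≥0} :
    LipschitzWith K (fderiv ℝ f) ↔ LipschitzWith K (gradient f) := by
  rw [← toDual_comp_gradient]
  exact (InnerProductSpace.toDual ℝ F).isometry.lipschitzWith_iff K

theorem Finset.sum_sum_le_mul_sum_of_forall_card_filter_le {ι κ R : Type*} [Fintype ι]
    [Fintype κ] [DecidableEq κ] [CommSemiring R] [PartialOrder R] [IsOrderedRing R]
    (S : ι → Finset κ) {p : ℕ}
    (hp : ∀ s, (Finset.univ.filter fun t => s ∈ S t).card ≤ p) {a : κ → R} (ha : 0 ≤ a) :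
    ∑ t, ∑ s ∈ S t, a s ≤ p * ∑ s, a s := by
  rw [Finset.sum_comm' (s' := fun s => Finset.univ.filter fun t => s ∈ S t) (t' := Finset.univ)
    (fun t s => by simp), Finset.mul_sum]
  gcongr with s
  rw [Finset.sum_const, nsmul_eq_mul]
  gcongr
  · exact ha s
  · exact_mod_cast hp s

theorem LinearMap.norm_apply_le_sqrt_mul_of_sum_sq_le {ι E : Type*} [Fintype ι]
    [SeminormedAddCommGroup E] [NormedSpace ℝ E] {F : ι → Type*}
    [∀ t, SeminormedAddCommGroup (F t)] [∀ t, NormedSpace ℝ (F t)] {A : ∀ t, E →ₗ[ℝ] F t} {K : ℝ}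
    (hA : ∀ u, ∑ t, ‖A t u‖ ^ 2 ≤ K * ‖u‖ ^ 2) (t : ι) (u : E) : ‖A t u‖ ≤ √K * ‖u‖ := by
  have hsq : ‖A t u‖ ^ 2 ≤ K * ‖u‖ ^ 2 :=
    (Finset.single_le_sum (fun t _ => sq_nonneg ‖A t u‖) (Finset.mem_univ t)).trans (hA u)
  simpa [Real.sqrt_mul' K (sq_nonneg ‖u‖)] using Real.abs_le_sqrt hsq

theorem sum_comp_le_add_fderiv_add {ι E : Type*} [Fintype ι] [NormedAddCommGroup E]
    [NormedSpace ℝ E] {F : ι → Type*} [∀ t, NormedAddCommGroup (F t)] [∀ t, NormedSpace ℝ (F t)]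
    {f : ∀ t, F t → ℝ} {A : ∀ t, E →ₗ[ℝ] F t} {L : ℝ≥0} {K : ℝ}
    (hf : ∀ t, Differentiable ℝ (f t)) (hlip : ∀ t, LipschitzWith L (fderiv ℝ (f t)))
    (hA : ∀ u, ∑ t, ‖A t u‖ ^ 2 ≤ K * ‖u‖ ^ 2) (x y : E) :
    ∑ t, f t (A t y) ≤
      ∑ t, f t (A t x) + fderiv ℝ (fun z => ∑ t, f t (A t z)) x (y - x) +
        K * L / 2 * ‖y - x‖ ^ 2 := by
  let Ac t : E →L[ℝ] F t :=
    (A t).mkContinuous √K (LinearMap.norm_apply_le_sqrt_mul_of_sum_sq_le hA t)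
  have hC : HasFDerivAt (fun z => ∑ t, f t (A t z))
      (∑ t, (fderiv ℝ (f t) (A t x)).comp (Ac t)) x :=
    HasFDerivAt.fun_sum fun t _ => (hf t _).hasFDerivAt.comp x (Ac t).hasFDerivAt
  calc ∑ t, f t (A t y)
      ≤ ∑ t, (f t (A t x) + fderiv ℝ (f t) (A t x) (A t (y - x)) +
          L / 2 * ‖A t (y - x)‖ ^ 2) := by
        gcongr with t
        simpa only [map_sub] using
          le_add_fderiv_add_of_lipschitzWith_fderiv (hf t) (hlip t) (A t x) (A t y)
    _ = ∑ t, f t (A t x) + fderiv ℝ (fun z => ∑ t, f t (A t z)) x (y - x) +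
          L / 2 * ∑ t, ‖A t (y - x)‖ ^ 2 := by
        simp [hC.fderiv, Ac, Finset.sum_add_distrib, Finset.mul_sum]
    _ ≤ _ := by
        have := mul_le_mul_of_nonneg_left (hA (y - x)) (by positivity : (0 : ℝ) ≤ L / 2)
        linarith

theorem stmt_2_general {N m T : ℕ}
    (p : ℕ) (l : ℝ) (hl : 0 < l)
    (n : Fin T → ℕ)
    (S : Fin T → Finset (Fin N))
    (hp : ∀ s : Fin N, (Finset.univ.filter fun t => s ∈ S t).card ≤ p)
    (M : (t : Fin T) →
      (PiLp 2 fun _ : Fin N => EuclideanSpace ℝ (Fin m)) →ₗ[ℝ] EuclideanSpace ℝ (Fin (n t)))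
    (hM : ∀ (t : Fin T) (w : PiLp 2 fun _ : Fin N => EuclideanSpace ℝ (Fin m)),
      ‖M t w‖ ^ 2 ≤ ∑ s ∈ S t, ‖w s‖ ^ 2)
    (f : (t : Fin T) → EuclideanSpace ℝ (Fin (n t)) → ℝ)
    (hdiff : ∀ t, Differentiable ℝ (f t))
    (hlip : ∀ t, LipschitzWith (Real.toNNReal l) (gradient (f t))) :
    ∀ w w' : PiLp 2 fun _ : Fin N => EuclideanSpace ℝ (Fin m),
      (∑ t : Fin T, f t (M t w')) ≤
        (∑ t : Fin T, f t (M t w)) +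
          (inner ℝ (gradient (fun v => ∑ t : Fin T, f t (M t v)) w) (w' - w) : ℝ) +
          (p : ℝ) * l / 2 * ‖w' - w‖ ^ 2 := by
  intro w w'
  have hMp (u : PiLp 2 fun _ : Fin N => EuclideanSpace ℝ (Fin m)) :
      ∑ t, ‖M t u‖ ^ 2 ≤ p * ‖u‖ ^ 2 :=
    calc ∑ t, ‖M t u‖ ^ 2
        ≤ ∑ t, ∑ s ∈ S t, ‖u s‖ ^ 2 := Finset.sum_le_sum fun t _ => hM t u
      _ ≤ p * ∑ s, ‖u s‖ ^ 2 :=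
          Finset.sum_sum_le_mul_sum_of_forall_card_filter_le S hp fun s => by positivity
      _ = p * ‖u‖ ^ 2 := by rw [PiLp.norm_sq_eq_of_L2 _ u]
  have := sum_comp_le_add_fderiv_add hdiff
    (fun t => lipschitzWith_fderiv_iff_lipschitzWith_gradient.mpr (hlip t)) hMp w w'
  rw [Real.coe_toNNReal l hl.le] at this
  rwa [inner_gradient_left]

/-- Smoothness half of Lemma 1(i): if each `f t` has an `l`-Lipschitz gradient, each linear
map `M t` satisfies `‖M t w‖² ≤ ∑_{s ∈ S t} ‖(w)_s‖²`, and every block index belongs to at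
most `p` of the index sets `S t`, then `C(w) = ∑ t, f t (M t w)` satisfies the `p·l`-smooth
quadratic upper bound. -/
theorem stmt_2 {N m T : ℕ} (hN : 0 < N) (hm : 0 < m) (hT : 0 < T)
    (p : ℕ) (l : ℝ) (hl : 0 < l)
    (n : Fin T → ℕ)
    (S : Fin T → Finset (Fin N))
    (hp : ∀ s : Fin N, (Finset.univ.filter fun t => s ∈ S t).card ≤ p)
    (M : (t : Fin T) →
      (PiLp 2 fun _ : Fin N => EuclideanSpace ℝ (Fin m)) →ₗ[ℝ] EuclideanSpace ℝ (Fin (n t)))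
    (hM : ∀ (t : Fin T) (w : PiLp 2 fun _ : Fin N => EuclideanSpace ℝ (Fin m)),
      ‖M t w‖ ^ 2 ≤ ∑ s ∈ S t, ‖w s‖ ^ 2)
    (f : (t : Fin T) → EuclideanSpace ℝ (Fin (n t)) → ℝ)
    (hdiff : ∀ t, Differentiable ℝ (f t))
    (hlip : ∀ t, LipschitzWith (Real.toNNReal l) (gradient (f t))) :
    ∀ w w' : PiLp 2 fun _ : Fin N => EuclideanSpace ℝ (Fin m),
      (∑ t : Fin T, f t (M t w')) ≤
        (∑ t : Fin T, f t (M t w)) +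
          (inner ℝ (gradient (fun v => ∑ t : Fin T, f t (M t v)) w) (w' - w) : ℝ) +
          (p : ℝ) * l / 2 * ‖w' - w‖ ^ 2 :=
  stmt_2_general p l hl n S hp M hM f hdiff hlip
end

section
/- Let n ≥ 1 and δ > 0. Let A ∈ ℝ^{n×n} be the cyclic shift matrix whose i-th row is the standard basis vector e_{i+1}ᵀ for 1 ≤ i ≤ n−1 and whose n-th row is e_1ᵀ, and let B = e_n ∈ ℝ^{n×1}. Let Q = δ·I_n and R = 1 (the 1×1 identity). Define q_n = (nδ + √(n²δ² + 4nδ))/2 and q_i = q_n − (n−i)δ for 1 ≤ i ≤ n. Then the diagonal matrix P = diag(q_1, …, q_n) is positive definite and satisfies the discrete-time algebraic Riccati equation P = Q + Aᵀ(P − P B (BᵀP B + R)^{−1} BᵀP)A. Moreover q_n > nδ and δ < q_1 < δ + 1. -/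
/-!
Since `P` is diagonal and `B = e_n`, the correction `P B (BᵀPB + 1)⁻¹ BᵀP` only alters the last
diagonal entry, turning `q_n` into `q_n / (q_n + 1)`, and conjugation by the cyclic shift `A`
moves the diagonal one step forward. The Riccati equation thus reduces to the scalar recursion
`q_{i+1} = δ + q_i`, `q_1 = δ + q_n / (q_n + 1)`. As `q_n` is the positive root of
`s² = nδ s + nδ`, we have `q_n / (q_n + 1) = q_n - nδ ∈ (0, 1)`, which closes the recursion and
gives the bounds.
-/

open Matrix

section
variable {ι 𝕜 : Type*} [Fintype ι] [DecidableEq ι] [Field 𝕜]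

theorem diagonal_sub_kalmanGain_single (d : ι → 𝕜) (L : ι) (hL : d L + 1 ≠ 0)
    (B : Matrix ι (Fin 1) 𝕜) (hB : B = replicateCol (Fin 1) (Pi.single L 1)) :
    diagonal d - diagonal d * B * (Bᵀ * diagonal d * B + 1)⁻¹ * Bᵀ * diagonal d =
      diagonal (Function.update d L (d L / (d L + 1))) := by
  have hS : Bᵀ * diagonal d * B + 1 = (d L + 1) • 1 := by
    ext i j
    simp [hB, mul_apply, Pi.single_apply, Subsingleton.elim i j]
  have hinv : (Bᵀ * diagonal d * B + 1)⁻¹ = (d L + 1)⁻¹ • 1 :=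
    inv_eq_right_inv (by simp [hS, hL])
  rw [hinv]
  ext i j
  rw [Matrix.mul_smul, Matrix.mul_one, Matrix.smul_mul, Matrix.smul_mul]
  simp only [hB, transpose_replicateCol, Matrix.sub_apply, diagonal_apply, Matrix.smul_apply,
    mul_apply, Finset.univ_unique, Fin.default_eq_zero, replicateCol_apply, Pi.single_apply,
    mul_ite, mul_one, mul_zero, Finset.sum_ite_eq', Finset.mem_univ, ↓reduceIte, replicateRow_apply,
    Finset.sum_ite_irrel, Finset.sum_const, Finset.card_singleton, one_smul,
    ite_mul, zero_mul, smul_eq_mul, Function.update_apply]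
  obtain rfl | hij := eq_or_ne i j
  · obtain rfl | hiL := eq_or_ne i L
    · simp only [if_true]
      field_simp
      ring
    · simp [hiL]
  · simp only [hij, if_false]
    split_ifs <;> simp_all

theorem transpose_permMatrix_mul_diagonal_mul (σ : Equiv.Perm ι) (d : ι → 𝕜) :
    (σ.toPEquiv.toMatrix)ᵀ * diagonal d * σ.toPEquiv.toMatrix = diagonal (d ∘ σ.symm) := by
  rw [← PEquiv.toMatrix_symm, ← Equiv.toPEquiv_symm, PEquiv.toMatrix_toPEquiv_mul,
    PEquiv.mul_toMatrix_toPEquiv, submatrix_submatrix]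
  exact submatrix_diagonal_equiv d σ.symm

theorem diagonal_eq_riccati_of_permMatrix (σ : Equiv.Perm ι) (L : ι) (δ : 𝕜) (d : ι → 𝕜)
    (hL : d L + 1 ≠ 0) (hrec : ∀ i, d (σ i) = δ + Function.update d L (d L / (d L + 1)) i)
    (B : Matrix ι (Fin 1) 𝕜) (hB : B = replicateCol (Fin 1) (Pi.single L 1)) :
    diagonal d = δ • 1 + (σ.toPEquiv.toMatrix)ᵀ *
      (diagonal d - diagonal d * B * (Bᵀ * diagonal d * B + 1)⁻¹ * Bᵀ * diagonal d) *
        σ.toPEquiv.toMatrix := by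
  rw [diagonal_sub_kalmanGain_single d L hL B hB, transpose_permMatrix_mul_diagonal_mul,
    smul_one_eq_diagonal, diagonal_add]
  congr 1
  exact (Equiv.eq_comp_symm σ _ _).mpr (funext hrec)

end

theorem sq_eq_of_eq_quadratic_root {c s : ℝ} (hc : 0 ≤ c) (hs : s = (c + √(c ^ 2 + 4 * c)) / 2) :
    s ^ 2 = c * s + c := by
  have hsq := Real.sq_sqrt (by positivity : 0 ≤ c ^ 2 + 4 * c)
  rw [hs]
  linear_combination hsq / 4

theorem lt_of_eq_quadratic_root {c s : ℝ} (hc : 0 < c) (hs : s = (c + √(c ^ 2 + 4 * c)) / 2) :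
    c < s := by
  have : c < √(c ^ 2 + 4 * c) := by
    rw [Real.lt_sqrt hc.le]
    linarith
  linarith

theorem div_add_one_eq_sub_of_sq_eq {K : Type*} [Field K] {c s : K} (h : s ^ 2 = c * s + c)
    (hs : s + 1 ≠ 0) : s / (s + 1) = s - c := by
  rw [div_eq_iff hs]
  linear_combination -h

theorem finRotate_eq_iff {n : ℕ} (i j : Fin n) :
    finRotate n i = j ↔ (i : ℕ) + 1 = j ∨ ((i : ℕ) = n - 1 ∧ (j : ℕ) = 0) := by
  cases n with
  | zero => exact i.elim0
  | succ k =>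
    rw [Fin.ext_iff, coe_finRotate]
    split_ifs with h <;> simp [Fin.ext_iff] at h <;> omega

theorem apply_finRotate_eq_add_update {n : ℕ} (hn : 1 ≤ n) {δ s : ℝ} (q : Fin n → ℝ)
    (hq : ∀ i : Fin n, q i = s - ((n - 1 - (i : ℕ) : ℕ) : ℝ) * δ) (hs : s / (s + 1) = s - n * δ)
    (i : Fin n) :
    q (finRotate n i) = δ + Function.update q ⟨n - 1, by omega⟩ (s / (s + 1)) i := by
  have hrot := (finRotate_eq_iff i (finRotate n i)).mp rfl
  have := (finRotate n i).isLt
  rw [Function.update_apply, hq, hq]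
  by_cases hi : (i : ℕ) = n - 1
  · have h0 : (finRotate n i : ℕ) = 0 := by omega
    rw [if_pos (Fin.ext hi), h0, hs, Nat.sub_zero, Nat.cast_sub hn]
    push_cast
    ring
  · have : n - 1 - (i : ℕ) = n - 1 - (finRotate n i : ℕ) + 1 := by omega
    rw [if_neg (fun h => hi (congrArg Fin.val h)), this]
    push_cast
    ring

/-- Lemma "form of `P^e`": for the cyclic-shift system with `Q = δI`, `R = 1`, the diagonal
matrix `P = diag(q_1, …, q_n)` with `q_n = (nδ + √(n²δ² + 4nδ))/2`, `q_i = q_n − (n−i)δ`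
is positive definite, solves the discrete-time algebraic Riccati equation, and satisfies
`q_n > nδ` and `δ < q_1 < δ + 1`. -/
theorem stmt_3 (n : ℕ) (hn : 1 ≤ n) (δ : ℝ) (hδ : 0 < δ)
    (A : Matrix (Fin n) (Fin n) ℝ)
    (hA : ∀ i j : Fin n, A i j =
      if (i : ℕ) + 1 = (j : ℕ) ∨ ((i : ℕ) = n - 1 ∧ (j : ℕ) = 0) then 1 else 0)
    (B : Matrix (Fin n) (Fin 1) ℝ)
    (hB : ∀ (i : Fin n) (j : Fin 1), B i j = if (i : ℕ) = n - 1 then 1 else 0)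
    (Q : Matrix (Fin n) (Fin n) ℝ) (hQ : Q = δ • (1 : Matrix (Fin n) (Fin n) ℝ))
    (R : Matrix (Fin 1) (Fin 1) ℝ) (hR : R = 1)
    (qn : ℝ) (hqn : qn = ((n : ℝ) * δ + Real.sqrt (((n : ℝ) * δ) ^ 2 + 4 * n * δ)) / 2)
    (q : Fin n → ℝ) (hq : ∀ i : Fin n, q i = qn - ((n - 1 - (i : ℕ) : ℕ) : ℝ) * δ)
    (P : Matrix (Fin n) (Fin n) ℝ) (hP : P = Matrix.diagonal q) :
    P.PosDef ∧
      P = Q + Aᵀ * (P - P * B * (Bᵀ * P * B + R)⁻¹ * Bᵀ * P) * A ∧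
      (n : ℝ) * δ < qn ∧ δ < q ⟨0, hn⟩ ∧ q ⟨0, hn⟩ < δ + 1 := by
  have hroot : qn = (n * δ + √((n * δ) ^ 2 + 4 * (n * δ))) / 2 := by rw [hqn, mul_assoc]
  have hnδ : 0 < (n : ℝ) * δ := by positivity
  have hlt := lt_of_eq_quadratic_root hnδ hroot
  have hgain := div_add_one_eq_sub_of_sq_eq (sq_eq_of_eq_quadratic_root hnδ.le hroot)
    (by linarith : qn + 1 ≠ 0)
  have hgain_lt : qn / (qn + 1) < 1 := (div_lt_one (by linarith)).mpr (by linarith)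
  have hq0 : q ⟨0, hn⟩ = δ + (qn - n * δ) := by
    rw [hq, Nat.sub_zero, Nat.cast_sub hn]
    push_cast
    ring
  have hq_pos : ∀ i, 0 < q i := fun i => by
    have : ((n - 1 - (i : ℕ) : ℕ) : ℝ) ≤ ((n - 1 : ℕ) : ℝ) := by exact_mod_cast Nat.sub_le _ _
    rw [Nat.cast_sub hn, Nat.cast_one] at this
    nlinarith [hq i]
  set L : Fin n := ⟨n - 1, by omega⟩
  have hqL : q L = qn := by simp [hq, L]
  have hA' : A = (finRotate n).toPEquiv.toMatrix := by
    ext i j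
    simp only [hA, PEquiv.toMatrix_apply, Equiv.toPEquiv_apply, Option.mem_def, Option.some_inj,
      finRotate_eq_iff]
  have hB' : B = replicateCol (Fin 1) (Pi.single L 1) := by
    ext i j
    simp [hB, Pi.single_apply, Fin.ext_iff, L]
  refine ⟨hP ▸ PosDef.diagonal hq_pos, ?_, hlt, by linarith, by linarith⟩
  rw [hP, hQ, hR, hA']
  refine diagonal_eq_riccati_of_permMatrix _ L δ q (by linarith) (fun i => ?_) B hB'
  rw [hqL]
  exact apply_finRotate_eq_add_update hn q hq hgain i
end

section
/- Let n ≥ 1, δ > 0, T ≥ 1, and let q_n ∈ ℝ satisfy nδ < q_n < nδ + 1. Let M ∈ ℝ^{T×T} be the symmetric tridiagonal matrix whose diagonal entries are all δn + 2 except the (T,T)-entry which is q_n + 1, and whose sub- and super-diagonal entries are all −1 (all other entries zero). Let ρ ∈ (0,1) be the root of ρ² − (δn+2)ρ + 1 = 0 with ρ < 1, i.e. ρ = ((δn+2) − √((δn+2)² − 4))/2. Then M is invertible and its inverse satisfies (M^{−1})_{t, t+τ} ≥ ((1−ρ)/(δn+2)) · ρ^τ for all indices with 1 ≤ t ≤ t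 + τ ≤ T. (Equivalently, ρ = (√ζ − 1)/(√ζ + 1) where ζ = (δn+4)/(δn).) -/
/-!
`M` has nonpositive off-diagonal entries and positive row sums, so it obeys a discrete maximum
principle: `M z ≥ 0` forces `z ≥ 0`. Hence `M` is invertible and every `y` with `M y ≤ e_s` lies
below the column `M⁻¹ e_s`. For `y` take `ρ^(s+2) (ρ^(-(t+1)) - ρ^(t+1))` for `t ≤ s` and `0` beyond
`s`: as `ρ + ρ⁻¹ = δn + 2`, it solves the three-term recurrence of the rows above `s` (with
boundary value `0` at the virtual index `-1`), and row `s` evaluates to `1 - ρ^(2s+4) ≤ 1`.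
Its entries are at least `ρ (1 - ρ²) ρ^(s-t) ≥ ((1 - ρ)/(δn + 2)) ρ^(s-t)`.
-/

open Matrix Finset

namespace Matrix

section MaximumPrinciple

variable {n : Type*} [Fintype n]

theorem nonneg_of_nonneg_mulVec {R : Type*} [CommRing R] [LinearOrder R] [IsStrictOrderedRing R]
    {M : Matrix n n R} (hnonpos : ∀ i j, i ≠ j → M i j ≤ 0) (hrow : ∀ i, 0 < ∑ j, M i j)
    {z : n → R} (hz : 0 ≤ M *ᵥ z) : 0 ≤ z := by
  intro k
  obtain ⟨i, -, hmin⟩ := exists_min_image univ z ⟨k, mem_univ k⟩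
  by_contra! hk
  have hzi : z i < 0 := (hmin k (mem_univ k)).trans_lt hk
  have hrow_i : (M *ᵥ z) i ≤ (∑ j, M i j) * z i := by
    rw [sum_mul]
    refine sum_le_sum fun j _ => ?_
    rcases eq_or_ne i j with rfl | hij
    · rfl
    · exact mul_le_mul_of_nonpos_left (hmin j (mem_univ j)) (hnonpos i j hij)
  linarith [show 0 ≤ (M *ᵥ z) i from hz i, mul_neg_of_pos_of_neg (hrow i) hzi]

theorem det_ne_zero_of_offDiag_nonpos {R : Type*} [CommRing R] [LinearOrder R]
    [IsStrictOrderedRing R] [DecidableEq n] {M : Matrix n n R}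
    (hnonpos : ∀ i j, i ≠ j → M i j ≤ 0) (hrow : ∀ i, 0 < ∑ j, M i j) : M.det ≠ 0 := by
  intro hdet
  obtain ⟨v, hv0, hv⟩ := exists_mulVec_eq_zero_iff.mpr hdet
  have hpos := nonneg_of_nonneg_mulVec hnonpos hrow hv.ge
  have hneg := nonneg_of_nonneg_mulVec hnonpos hrow (z := -v) (by rw [mulVec_neg, hv, neg_zero])
  exact hv0 (le_antisymm (neg_nonneg.mp hneg) hpos)

theorem le_inv_apply_of_mulVec_le_single {K : Type*} [Field K] [LinearOrder K]
    [IsStrictOrderedRing K] [DecidableEq n] {M : Matrix n n K}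
    (hnonpos : ∀ i j, i ≠ j → M i j ≤ 0) (hrow : ∀ i, 0 < ∑ j, M i j) {y : n → K} {s : n}
    (hy : M *ᵥ y ≤ Pi.single s 1) (t : n) : y t ≤ M⁻¹ t s := by
  have hdet : IsUnit M.det := (det_ne_zero_of_offDiag_nonpos hnonpos hrow).isUnit
  have hcol : M *ᵥ (M⁻¹ *ᵥ Pi.single s 1) = Pi.single s 1 := by
    rw [mulVec_mulVec, mul_nonsing_inv _ hdet, one_mulVec]
  have hgap := nonneg_of_nonneg_mulVec hnonpos hrow (z := M⁻¹ *ᵥ Pi.single s 1 - y)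
    (by rw [mulVec_sub, hcol]; exact sub_nonneg.mpr hy)
  simpa [mulVec_single_one, sub_nonneg] using hgap t

end MaximumPrinciple

section Tridiagonal

variable {R : Type*} {T : ℕ}

theorem mulVec_apply_of_tridiagonal [CommRing R] {M : Matrix (Fin T) (Fin T) R}
    (hoff : ∀ i j : Fin T, (i : ℕ) + 1 = j ∨ (j : ℕ) + 1 = i → M i j = -1)
    (hzero : ∀ i j : Fin T, i ≠ j → (i : ℕ) + 1 ≠ j → (j : ℕ) + 1 ≠ i → M i j = 0)
    (v : ℕ → R) (i : Fin T) :
    (M *ᵥ fun j => v j) i = M i i * v i - (if 0 < (i : ℕ) then v (i - 1) else 0)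
      - (if (i : ℕ) + 1 < T then v (i + 1) else 0) := by
  have hentry : ∀ j : Fin T, M i j * v j =
      (if (j : ℕ) = i then M i i * v j else 0) - (if (j : ℕ) + 1 = i then v j else 0)
        - (if (j : ℕ) = i + 1 then v j else 0) := by
    intro j
    rcases eq_or_ne j i with rfl | hji
    · simp
    have hval : (j : ℕ) ≠ i := Fin.val_ne_of_ne hji
    by_cases hlow : (j : ℕ) + 1 = i
    · simp [hval, hlow, hoff i j (Or.inr hlow), show (j : ℕ) ≠ i + 1 by omega]
    by_cases hup : (j : ℕ) = i + 1
    · rw [if_neg hval, if_neg hlow, if_pos hup, hoff i j (Or.inl hup.symm)]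
      ring
    · simp [hval, hlow, hup, hzero i j hji.symm (Ne.symm hup) hlow]
  have hlower : (∑ k ∈ range T, if k + 1 = i then v k else 0) =
      if 0 < (i : ℕ) then v (i - 1) else 0 := by
    obtain ⟨_ | m, hi⟩ := i
    · simp
    · simp [show m < T by omega]
  change ∑ j, M i j * v j = _
  rw [sum_congr rfl fun j _ => hentry j, sum_sub_distrib, sum_sub_distrib,
    Fin.sum_univ_eq_sum_range (fun k => if k = i then M i i * v k else 0),
    Fin.sum_univ_eq_sum_range (fun k => if k + 1 = i then v k else 0),
    Fin.sum_univ_eq_sum_range (fun k => if k = i + 1 then v k else 0),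
    sum_ite_eq', sum_ite_eq', hlower, if_pos (mem_range.mpr i.isLt)]
  simp only [mem_range]

theorem sum_row_of_tridiagonal [CommRing R] {M : Matrix (Fin T) (Fin T) R}
    (hoff : ∀ i j : Fin T, (i : ℕ) + 1 = j ∨ (j : ℕ) + 1 = i → M i j = -1)
    (hzero : ∀ i j : Fin T, i ≠ j → (i : ℕ) + 1 ≠ j → (j : ℕ) + 1 ≠ i → M i j = 0)
    (i : Fin T) :
    ∑ j, M i j = M i i - (if 0 < (i : ℕ) then 1 else 0) - (if (i : ℕ) + 1 < T then 1 else 0) := by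
  simpa only [mulVec, dotProduct, mul_one] using
    mulVec_apply_of_tridiagonal hoff hzero (fun _ => (1 : R)) i

theorem offDiag_nonpos_of_tridiagonal [CommRing R] [PartialOrder R] [IsOrderedRing R]
    {M : Matrix (Fin T) (Fin T) R}
    (hoff : ∀ i j : Fin T, (i : ℕ) + 1 = j ∨ (j : ℕ) + 1 = i → M i j = -1)
    (hzero : ∀ i j : Fin T, i ≠ j → (i : ℕ) + 1 ≠ j → (j : ℕ) + 1 ≠ i → M i j = 0)
    (i j : Fin T) (hij : i ≠ j) : M i j ≤ 0 := by
  by_cases hadj : (i : ℕ) + 1 = j ∨ (j : ℕ) + 1 = i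
  · simp [hoff i j hadj]
  · rw [hzero i j hij (not_or.mp hadj).1 (not_or.mp hadj).2]

end Tridiagonal

end Matrix

lemma smaller_root_spec {A ρ : ℝ} (hA : 2 < A) (hρ : ρ = (A - √(A ^ 2 - 4)) / 2) :
    0 < ρ ∧ ρ < 1 ∧ ρ + ρ⁻¹ = A := by
  have hsq : √(A ^ 2 - 4) ^ 2 = A ^ 2 - 4 := Real.sq_sqrt (by nlinarith)
  have hsqrt_nonneg := Real.sqrt_nonneg (A ^ 2 - 4)
  have hρ0 : 0 < ρ := by rw [hρ]; nlinarith
  refine ⟨hρ0, by rw [hρ]; nlinarith, ?_⟩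
  have hprod : ρ * (A - ρ) = 1 := by rw [hρ]; linear_combination (-1 / 4) * hsq
  rw [← eq_sub_iff_add_eq', inv_eq_of_mul_eq_one_right hprod]

lemma one_sub_div_add_inv_le {ρ : ℝ} (hρ0 : 0 < ρ) (hρ1 : ρ ≤ 1) :
    (1 - ρ) / (ρ + ρ⁻¹) ≤ ρ * (1 - ρ ^ 2) := by
  have hmul : ρ * (ρ + ρ⁻¹) = ρ ^ 2 + 1 := by field_simp
  rw [div_le_iff₀ (by positivity), mul_right_comm, hmul]
  nlinarith [mul_nonneg (sub_nonneg.mpr hρ1) (mul_nonneg hρ0.le (sq_nonneg ρ)),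
    mul_nonneg (sub_nonneg.mpr hρ1) (sq_nonneg ρ)]

section LowerBarrier

variable {ρ : ℝ}

noncomputable def lowerBarrier (ρ : ℝ) (s k : ℕ) : ℝ :=
  if k ≤ s then ρ ^ (s + 2) * (ρ⁻¹ ^ (k + 1) - ρ ^ (k + 1)) else 0

lemma lowerBarrier_nonneg (hρ0 : 0 < ρ) (hρ1 : ρ ≤ 1) (s k : ℕ) : 0 ≤ lowerBarrier ρ s k := by
  unfold lowerBarrier
  split_ifs
  · have hle : ρ ≤ ρ⁻¹ := hρ1.trans ((one_le_inv₀ hρ0).mpr hρ1)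
    exact mul_nonneg (by positivity) (sub_nonneg.mpr (pow_le_pow_left₀ hρ0.le hle _))
  · rfl

lemma mul_pow_le_lowerBarrier (hρ0 : 0 < ρ) (hρ1 : ρ ≤ 1) {s t : ℕ} (hts : t ≤ s) :
    ρ * (1 - ρ ^ 2) * ρ ^ (s - t) ≤ lowerBarrier ρ s t := by
  obtain ⟨m, rfl⟩ := Nat.exists_eq_add_of_le hts
  have hinv : ρ ^ (t + 1) * ρ⁻¹ ^ (t + 1) = 1 := by
    rw [← mul_pow, mul_inv_cancel₀ hρ0.ne', one_pow]
  have hexpand : ρ ^ (t + m + 2) * (ρ⁻¹ ^ (t + 1) - ρ ^ (t + 1)) =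
      ρ * ρ ^ m - ρ ^ 3 * ρ ^ m * ρ ^ (2 * t) := by
    linear_combination ρ ^ (m + 1) * hinv
  rw [lowerBarrier, if_pos hts, Nat.add_sub_cancel_left, hexpand]
  have hpow : ρ ^ (2 * t) ≤ 1 := pow_le_one₀ hρ0.le hρ1
  have hcube : 0 ≤ ρ ^ 3 * ρ ^ m := by positivity
  nlinarith

lemma add_inv_mul_lowerBarrier_sub (hρ : ρ ≠ 0) {s k : ℕ} (hk : k ≤ s) :
    (ρ + ρ⁻¹) * lowerBarrier ρ s k - (if 0 < k then lowerBarrier ρ s (k - 1) else 0) =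
      ρ ^ (s + 2) * (ρ⁻¹ ^ (k + 2) - ρ ^ (k + 2)) := by
  rw [lowerBarrier, if_pos hk]
  cases k with
  | zero =>
    simp only [lt_irrefl, if_false]
    ring
  | succ m =>
    rw [if_pos m.succ_pos, Nat.add_sub_cancel, lowerBarrier, if_pos (by omega)]
    linear_combination ρ ^ (s + 2) * (ρ⁻¹ ^ (m + 1) - ρ ^ (m + 1)) * mul_inv_cancel₀ hρ

theorem mulVec_lowerBarrier_le_single {T : ℕ} {M : Matrix (Fin T) (Fin T) ℝ} (hρ0 : 0 < ρ)
    (hρ1 : ρ ≤ 1) (hoff : ∀ i j : Fin T, (i : ℕ) + 1 = j ∨ (j : ℕ) + 1 = i → M i j = -1)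
    (hzero : ∀ i j : Fin T, i ≠ j → (i : ℕ) + 1 ≠ j → (j : ℕ) + 1 ≠ i → M i j = 0)
    (hdiag_le : ∀ i, M i i ≤ ρ + ρ⁻¹) (hdiag : ∀ i : Fin T, (i : ℕ) + 1 < T → M i i = ρ + ρ⁻¹)
    (s : Fin T) : (M *ᵥ fun j => lowerBarrier ρ s j) ≤ Pi.single s 1 := by
  intro i
  rw [mulVec_apply_of_tridiagonal hoff hzero]
  have hnonneg := lowerBarrier_nonneg hρ0 hρ1 s
  rcases lt_trichotomy (i : ℕ) s with hlt | heq | hgt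
  · have hrec := add_inv_mul_lowerBarrier_sub hρ0.ne' hlt.le
    have hnext : lowerBarrier ρ s (i + 1) =
        ρ ^ ((s : ℕ) + 2) * (ρ⁻¹ ^ ((i : ℕ) + 2) - ρ ^ ((i : ℕ) + 2)) := if_pos (by omega)
    have hiT : (i : ℕ) + 1 < T := by omega
    rw [Pi.single_eq_of_ne (Fin.ne_of_lt hlt), hdiag i hiT, if_pos hiT, hnext]
    linarith
  · obtain rfl : i = s := Fin.ext heq
    have hpeak := add_inv_mul_lowerBarrier_sub hρ0.ne' le_rfl (s := i)
    have hdiag_mul := mul_le_mul_of_nonneg_right (hdiag_le i) (hnonneg i)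
    have hout : lowerBarrier ρ i (i + 1) = 0 := if_neg (by omega)
    have hpow : ρ ^ ((i : ℕ) + 2) * ρ⁻¹ ^ ((i : ℕ) + 2) = 1 := by
      rw [← mul_pow, mul_inv_cancel₀ hρ0.ne', one_pow]
    rw [Pi.single_eq_same, hout, ite_self, sub_zero]
    nlinarith [pow_nonneg hρ0.le ((i : ℕ) + 2)]
  · have hout : lowerBarrier ρ s i = 0 := if_neg (by omega)
    have hprev : 0 ≤ if 0 < (i : ℕ) then lowerBarrier ρ s (i - 1) else 0 := by
      split_ifs <;> simp [hnonneg]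
    have hnext : 0 ≤ if (i : ℕ) + 1 < T then lowerBarrier ρ s (i + 1) else 0 := by
      split_ifs <;> simp [hnonneg]
    rw [Pi.single_eq_of_ne (Fin.ne_of_gt hgt), hout, mul_zero]
    linarith

end LowerBarrier

theorem stmt_4_general (n T : ℕ) (hn : 1 ≤ n) (δ : ℝ) (hδ : 0 < δ)
    (qn : ℝ) (hqn1 : (n : ℝ) * δ < qn) (hqn2 : qn < (n : ℝ) * δ + 1)
    (M : Matrix (Fin T) (Fin T) ℝ)
    (hMdiag : ∀ i : Fin T, M i i = if (i : ℕ) = T - 1 then qn + 1 else δ * n + 2)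
    (hMoff : ∀ i j : Fin T, (i : ℕ) + 1 = (j : ℕ) ∨ (j : ℕ) + 1 = (i : ℕ) → M i j = -1)
    (hMzero : ∀ i j : Fin T, i ≠ j →
      (i : ℕ) + 1 ≠ (j : ℕ) → (j : ℕ) + 1 ≠ (i : ℕ) → M i j = 0)
    (ρ : ℝ) (hρ : ρ = ((δ * n + 2) - Real.sqrt ((δ * n + 2) ^ 2 - 4)) / 2) :
    0 < ρ ∧ ρ < 1 ∧ IsUnit M.det ∧
      ∀ t s : Fin T, t ≤ s →
        ((1 - ρ) / (δ * n + 2)) * ρ ^ ((s : ℕ) - (t : ℕ)) ≤ M⁻¹ t s := by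
  have hδn : 0 < δ * n := mul_pos hδ (by exact_mod_cast hn)
  obtain ⟨hρ0, hρ1, hρA⟩ := smaller_root_spec (by linarith) hρ
  have hdiag_le : ∀ i, M i i ≤ ρ + ρ⁻¹ := fun i => by
    rw [hMdiag, hρA]
    split_ifs <;> linarith
  have hdiag : ∀ i : Fin T, (i : ℕ) + 1 < T → M i i = ρ + ρ⁻¹ := fun i hi => by
    rw [hMdiag, if_neg (by omega), hρA]
  have hnonpos := offDiag_nonpos_of_tridiagonal hMoff hMzero
  have hrow : ∀ i, 0 < ∑ j, M i j := fun i => by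
    rw [sum_row_of_tridiagonal hMoff hMzero, hMdiag]
    split_ifs <;> first | linarith | omega
  refine ⟨hρ0, hρ1, (det_ne_zero_of_offDiag_nonpos hnonpos hrow).isUnit, fun t s hts => ?_⟩
  calc (1 - ρ) / (δ * n + 2) * ρ ^ ((s : ℕ) - t)
      ≤ ρ * (1 - ρ ^ 2) * ρ ^ ((s : ℕ) - t) := by
        rw [← hρA]
        gcongr
        exact one_sub_div_add_inv_le hρ0 hρ1.le
    _ ≤ lowerBarrier ρ s t := mul_pow_le_lowerBarrier hρ0 hρ1.le hts
    _ ≤ M⁻¹ t s := le_inv_apply_of_mulVec_le_single hnonpos hrow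
        (mulVec_lowerBarrier_le_single hρ0 hρ1.le hMoff hMzero hdiag_le hdiag s) t

/-- Lemma "`H` and `H⁻¹` properties": the symmetric tridiagonal matrix `M` with diagonal
`δn+2` (last entry `q_n+1`, where `nδ < q_n < nδ+1`) and off-diagonal `−1` is invertible
and its inverse has entries decaying geometrically away from the diagonal:
`(M⁻¹)_{t,t+τ} ≥ ((1−ρ)/(δn+2)) ρ^τ` where `ρ` is the root of `ρ² − (δn+2)ρ + 1 = 0`
with `ρ < 1`. -/
theorem stmt_4 (n T : ℕ) (hn : 1 ≤ n) (hT : 1 ≤ T) (δ : ℝ) (hδ : 0 < δ)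
    (qn : ℝ) (hqn1 : (n : ℝ) * δ < qn) (hqn2 : qn < (n : ℝ) * δ + 1)
    (M : Matrix (Fin T) (Fin T) ℝ)
    (hMdiag : ∀ i : Fin T, M i i = if (i : ℕ) = T - 1 then qn + 1 else δ * n + 2)
    (hMoff : ∀ i j : Fin T, (i : ℕ) + 1 = (j : ℕ) ∨ (j : ℕ) + 1 = (i : ℕ) → M i j = -1)
    (hMzero : ∀ i j : Fin T, i ≠ j →
      (i : ℕ) + 1 ≠ (j : ℕ) → (j : ℕ) + 1 ≠ (i : ℕ) → M i j = 0)
    (ρ : ℝ) (hρ : ρ = ((δ * n + 2) - Real.sqrt ((δ * n + 2) ^ 2 - 4)) / 2) :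
    0 < ρ ∧ ρ < 1 ∧ IsUnit M.det ∧
      ∀ t s : Fin T, t ≤ s →
        ((1 - ρ) / (δ * n + 2)) * ρ ^ ((s : ℕ) - (t : ℕ)) ≤ M⁻¹ t s :=
  stmt_4_general n T hn δ hδ qn hqn1 hqn2 M hMdiag hMoff hMzero ρ hρ
end

section
/- Let A ∈ ℝ^{n×n} have spectral radius strictly less than 1 (all eigenvalues of modulus < 1), let (A_t)_{t≥0} be a sequence of n×n matrices with A_t → A (in operator norm), and let η ∈ ℝ^n. Let x^s be the unique vector with x^s = A x^s + η (which exists since I − A is invertible). Then for every initial vector x_0 ∈ ℝ^n, the sequence defined by x_{t+1} = A_t x_t + η converges to x^s. -/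
open Matrix Filter Topology

/-!
By Gelfand's formula, spectral radius `< 1` makes `∑ₖ ‖Aᵏ‖` converge, so
`ν v = ∑ₖ ‖Aᵏ v‖` is a norm equivalent to `‖·‖` with `ν (A v) = ν v - ‖v‖`; hence `A` is a
strict contraction for `ν`. The error `eₜ = xₜ - xˢ` satisfies
`eₜ₊₁ = Aₜ eₜ + (Aₜ - A) xˢ`, so `ν eₜ₊₁ ≤ (s + O(‖Aₜ - A‖)) ν eₜ + O(‖Aₜ - A‖)` with `s < 1`,
and a perturbed geometric recursion of this kind tends to `0`.
-/

theorem le_pow_mul_add_of_le_mul_add {u : ℕ → ℝ} {s ε : ℝ} {T : ℕ} (hs : 0 ≤ s) (hε : 0 ≤ ε)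
    (hrec : ∀ t ≥ T, u (t + 1) ≤ s * u t + (1 - s) * ε) :
    ∀ t ≥ T, u t ≤ s ^ (t - T) * u T + ε := by
  refine Nat.le_induction (by simpa using hε) fun t hT ih => ?_
  calc u (t + 1) ≤ s * u t + (1 - s) * ε := hrec t hT
    _ ≤ s * (s ^ (t - T) * u T + ε) + (1 - s) * ε := by gcongr
    _ = s ^ (t + 1 - T) * u T + ε := by rw [Nat.sub_add_comm hT, pow_succ]; ring

theorem tendsto_zero_of_le_mul_add {u r b : ℕ → ℝ} {ρ : ℝ} (hu : ∀ t, 0 ≤ u t)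
    (hr : Tendsto r atTop (𝓝 ρ)) (hρ : ρ < 1) (hb : Tendsto b atTop (𝓝 0))
    (hrec : ∀ t, u (t + 1) ≤ r t * u t + b t) : Tendsto u atTop (𝓝 0) := by
  obtain ⟨s, hρs, hs1⟩ := exists_between (max_lt hρ one_pos)
  have hs0 : 0 ≤ s := (le_max_right _ _).trans hρs.le
  refine tendsto_order.2 ⟨fun a ha => .of_forall fun t => ha.trans_le (hu t), fun a ha => ?_⟩
  have hε : 0 < a / 2 := half_pos ha
  obtain ⟨T, hT⟩ := eventually_atTop.1 <|
    (hr.eventually_lt_const ((le_max_left _ _).trans_lt hρs)).and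
      (hb.eventually_lt_const (mul_pos (sub_pos.2 hs1) hε))
  have hgeom := le_pow_mul_add_of_le_mul_add hs0 hε.le fun t ht => (hrec t).trans <|
    add_le_add (mul_le_mul_of_nonneg_right (hT t ht).1.le (hu t)) (hT t ht).2.le
  have hdecay : Tendsto (fun t => s ^ (t - T) * u T) atTop (𝓝 0) := by
    simpa using ((tendsto_pow_atTop_nhds_zero_of_lt_one hs0 hs1).comp
      (tendsto_sub_atTop_nat T)).mul_const (u T)
  filter_upwards [hdecay.eventually_lt_const hε, eventually_ge_atTop T] with t hsmall ht
  linarith [hgeom t ht]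

theorem summable_norm_pow_of_spectralRadius_lt_one {B : Type*} [NormedRing B] [NormedAlgebra ℂ B]
    [CompleteSpace B] {a : B} (ha : spectralRadius ℂ a < 1) : Summable fun k => ‖a ^ k‖ := by
  obtain ⟨r, hρr, hr1⟩ := ENNReal.lt_iff_exists_nnreal_btwn.1 ha
  refine .of_norm_bounded_eventually_nat
    (NNReal.summable_coe.2 (NNReal.summable_geometric (by exact_mod_cast hr1))) ?_
  have hroot := spectrum.pow_nnnorm_pow_one_div_tendsto_nhds_spectralRadius a
  filter_upwards [hroot.eventually_lt_const hρr, eventually_gt_atTop 0] with k hk hk0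
  rw [one_div, ENNReal.rpow_inv_lt_iff (by positivity), ENNReal.rpow_natCast] at hk
  rw [norm_norm]
  exact_mod_cast hk.le

section LinftyOp

attribute [local instance] Matrix.linftyOpNormedAddCommGroup Matrix.linftyOpNormedRing
  Matrix.linftyOpNormedAlgebra

namespace Matrix

theorem linfty_opNorm_map_ofReal {m n : Type*} [Fintype m] [Fintype n] (A : Matrix m n ℝ) :
    ‖A.map (algebraMap ℝ ℂ)‖ = ‖A‖ := by
  simp [linfty_opNorm_def]

theorem summable_linfty_opNorm_pow {ι : Type*} [Fintype ι] [DecidableEq ι]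
    {A : Matrix ι ι ℝ} (hA : ∀ μ ∈ spectrum ℂ (A.map (algebraMap ℝ ℂ)), ‖μ‖ < 1) :
    Summable fun k => ‖A ^ k‖ := by
  have : CompleteSpace (Matrix ι ι ℂ) := FiniteDimensional.complete ℂ _
  have hρ : spectralRadius ℂ (A.map (algebraMap ℝ ℂ)) < 1 := by
    rcases (spectrum ℂ (A.map (algebraMap ℝ ℂ))).eq_empty_or_nonempty with h | h
    · rw [spectralRadius, h]
      simp
    · exact_mod_cast spectrum.spectralRadius_lt_of_forall_lt_of_nonempty h (r := 1)
        fun z hz => by exact_mod_cast hA z hz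
  refine (summable_norm_pow_of_spectralRadius_lt_one hρ).congr fun k => ?_
  rw [← Matrix.map_pow, linfty_opNorm_map_ofReal]

variable {R ι : Type*} [NormedRing R] [Fintype ι] [DecidableEq ι] {A : Matrix ι ι R}

noncomputable def lyapunovNorm (A : Matrix ι ι R) (v : ι → R) : ℝ := ∑' k, ‖A ^ k *ᵥ v‖

theorem lyapunovNorm_nonneg (v : ι → R) : 0 ≤ lyapunovNorm A v :=
  tsum_nonneg fun _ => norm_nonneg _

theorem summable_norm_pow_mulVec (hA : Summable fun k => ‖A ^ k‖) (v : ι → R) :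
    Summable fun k => ‖A ^ k *ᵥ v‖ :=
  (hA.mul_right ‖v‖).of_nonneg_of_le (fun _ => norm_nonneg _) fun _ => linfty_opNorm_mulVec _ _

theorem norm_le_lyapunovNorm (hA : Summable fun k => ‖A ^ k‖) (v : ι → R) :
    ‖v‖ ≤ lyapunovNorm A v := by
  simpa [lyapunovNorm] using (summable_norm_pow_mulVec hA v).le_tsum 0 fun _ _ => norm_nonneg _

theorem lyapunovNorm_le (hA : Summable fun k => ‖A ^ k‖) (v : ι → R) :
    lyapunovNorm A v ≤ (∑' k, ‖A ^ k‖) * ‖v‖ := by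
  rw [← tsum_mul_right]
  exact (summable_norm_pow_mulVec hA v).tsum_le_tsum (fun _ => linfty_opNorm_mulVec _ _)
    (hA.mul_right _)

theorem lyapunovNorm_add_le (hA : Summable fun k => ‖A ^ k‖) (v w : ι → R) :
    lyapunovNorm A (v + w) ≤ lyapunovNorm A v + lyapunovNorm A w := by
  have hv := summable_norm_pow_mulVec hA v
  have hw := summable_norm_pow_mulVec hA w
  rw [lyapunovNorm, lyapunovNorm, lyapunovNorm, ← hv.tsum_add hw]
  exact (summable_norm_pow_mulVec hA _).tsum_le_tsum
    (fun _ => by rw [mulVec_add]; exact norm_add_le _ _) (hv.add hw)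

theorem lyapunovNorm_mulVec_add_norm (hA : Summable fun k => ‖A ^ k‖) (v : ι → R) :
    lyapunovNorm A (A *ᵥ v) + ‖v‖ = lyapunovNorm A v := by
  rw [lyapunovNorm, lyapunovNorm, (summable_norm_pow_mulVec hA v).tsum_eq_zero_add]
  simp [mulVec_mulVec, ← pow_succ, add_comm]

theorem lyapunovNorm_mulVec_le (hA : Summable fun k => ‖A ^ k‖) (v : ι → R) :
    lyapunovNorm A (A *ᵥ v) ≤ (1 - (∑' k, ‖A ^ k‖ + 1)⁻¹) * lyapunovNorm A v := by
  have hv : (∑' k, ‖A ^ k‖ + 1)⁻¹ * lyapunovNorm A v ≤ ‖v‖ := by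
    rw [inv_mul_le_iff₀ (by positivity)]
    nlinarith [lyapunovNorm_le hA v, norm_nonneg v]
  rw [sub_mul, one_mul]
  linarith [lyapunovNorm_mulVec_add_norm hA v]

theorem lyapunovNorm_mulVec_le_mul (hA : Summable fun k => ‖A ^ k‖) (B : Matrix ι ι R)
    (v : ι → R) : lyapunovNorm A (B *ᵥ v) ≤ (∑' k, ‖A ^ k‖) * ‖B‖ * ‖v‖ := by
  rw [mul_assoc]
  exact (lyapunovNorm_le hA _).trans <|
    mul_le_mul_of_nonneg_left (linfty_opNorm_mulVec B v) (by positivity)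

theorem lyapunovNorm_perturbed_mulVec_le (hA : Summable fun k => ‖A ^ k‖) (B : Matrix ι ι R)
    (v w : ι → R) :
    lyapunovNorm A (B *ᵥ v + (B - A) *ᵥ w) ≤
      (1 - (∑' k, ‖A ^ k‖ + 1)⁻¹ + (∑' k, ‖A ^ k‖) * ‖B - A‖) * lyapunovNorm A v +
        (∑' k, ‖A ^ k‖) * ‖B - A‖ * ‖w‖ := by
  have hv : (∑' k, ‖A ^ k‖) * ‖B - A‖ * ‖v‖ ≤ (∑' k, ‖A ^ k‖) * ‖B - A‖ * lyapunovNorm A v :=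
    mul_le_mul_of_nonneg_left (norm_le_lyapunovNorm hA v) (by positivity)
  have hsplit : B *ᵥ v + (B - A) *ᵥ w = A *ᵥ v + ((B - A) *ᵥ v + (B - A) *ᵥ w) := by
    simp only [sub_mulVec]
    abel
  calc lyapunovNorm A (B *ᵥ v + (B - A) *ᵥ w)
      ≤ lyapunovNorm A (A *ᵥ v) +
          (lyapunovNorm A ((B - A) *ᵥ v) + lyapunovNorm A ((B - A) *ᵥ w)) := by
        rw [hsplit]
        exact (lyapunovNorm_add_le hA _ _).trans (add_le_add le_rfl (lyapunovNorm_add_le hA _ _))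
    _ ≤ _ := by
        linarith [lyapunovNorm_mulVec_le hA v, lyapunovNorm_mulVec_le_mul hA (B - A) v,
          lyapunovNorm_mulVec_le_mul hA (B - A) w]

theorem tendsto_of_perturbed_linear_recurrence (hA : Summable fun k => ‖A ^ k‖)
    {At : ℕ → Matrix ι ι R} (hAt : Tendsto At atTop (𝓝 A)) {η xs : ι → R}
    (hxs : xs = A *ᵥ xs + η) {x : ℕ → ι → R} (hx : ∀ t, x (t + 1) = At t *ᵥ x t + η) :
    Tendsto x atTop (𝓝 xs) := by
  have herr (t : ℕ) : x (t + 1) - xs = At t *ᵥ (x t - xs) + (At t - A) *ᵥ xs := by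
    rw [hx t, eq_sub_of_add_eq' hxs.symm, mulVec_sub, sub_mulVec]
    abel
  have hδ : Tendsto (fun t => ‖At t - A‖) atTop (𝓝 0) := tendsto_iff_norm_sub_tendsto_zero.1 hAt
  set K := ∑' k, ‖A ^ k‖
  have hν : Tendsto (fun t => lyapunovNorm A (x t - xs)) atTop (𝓝 0) :=
    tendsto_zero_of_le_mul_add (fun _ => lyapunovNorm_nonneg _)
      (by simpa using (hδ.const_mul K).const_add (1 - (K + 1)⁻¹))
      (sub_lt_self 1 (by positivity))
      (by simpa using (hδ.const_mul K).mul_const ‖xs‖)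
      fun t => herr t ▸ lyapunovNorm_perturbed_mulVec_le hA (At t) (x t - xs) xs
  exact tendsto_iff_norm_sub_tendsto_zero.2 <|
    squeeze_zero (fun _ => norm_nonneg _) (fun _ => norm_le_lyapunovNorm hA _) hν

end Matrix

end LinftyOp

theorem stmt_5_general {n : ℕ} (A : Matrix (Fin n) (Fin n) ℝ)
    (hA : ∀ μ ∈ spectrum ℂ (A.map (algebraMap ℝ ℂ)), ‖μ‖ < 1)
    (At : ℕ → Matrix (Fin n) (Fin n) ℝ)
    (hAt : Filter.Tendsto At Filter.atTop (nhds A))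
    (η : Fin n → ℝ)
    (xs : Fin n → ℝ) (hxs : xs = A.mulVec xs + η)
    (x : ℕ → Fin n → ℝ)
    (hx : ∀ t : ℕ, x (t + 1) = (At t).mulVec (x t) + η) :
    Filter.Tendsto x Filter.atTop (nhds xs) :=
  Matrix.tendsto_of_perturbed_linear_recurrence (Matrix.summable_linfty_opNorm_pow hA) hAt hxs hx

/-- Appendix-D Claim: if `A` is Schur stable (all complex eigenvalues of modulus `< 1`),
`A_t → A`, and `x^s` is the fixed point `x^s = A x^s + η`, then the trajectory of
`x_{t+1} = A_t x_t + η` converges to `x^s` from any initial point. -/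
theorem stmt_5 {n : ℕ} (A : Matrix (Fin n) (Fin n) ℝ)
    (hA : ∀ μ ∈ spectrum ℂ (A.map (algebraMap ℝ ℂ)), ‖μ‖ < 1)
    (At : ℕ → Matrix (Fin n) (Fin n) ℝ)
    (hAt : Filter.Tendsto At Filter.atTop (nhds A))
    (η : Fin n → ℝ)
    (xs : Fin n → ℝ) (hxs : xs = A.mulVec xs + η)
    (x : ℕ → Fin n → ℝ) (x0 : Fin n → ℝ) (hx0 : x 0 = x0)
    (hx : ∀ t : ℕ, x (t + 1) = (At t).mulVec (x t) + η) :
    Filter.Tendsto x Filter.atTop (nhds xs) :=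
  stmt_5_general A hA At hAt η xs hxs x hx
end

section
/- Let A ∈ ℝ^{n×n}, B ∈ ℝ^{n×m}, let Q ∈ ℝ^{n×n} and R ∈ ℝ^{m×m} be symmetric positive definite, and let θ ∈ ℝ^n. Suppose P ∈ ℝ^{n×n} is a symmetric positive-definite solution of the discrete-time algebraic Riccati equation P = Q + Aᵀ(P − PB(R + BᵀPB)^{−1}BᵀP)A. Define M = P − PB(R + BᵀPB)^{−1}BᵀP, H = M − MA(Q + AᵀMA)^{−1}AᵀM, K = (R + BᵀPB)^{−1}BᵀPA, K' = (R + BᵀPB)^{−1}BᵀP. Assume I_n − (A − BK)ᵀ is invertible, and set α = (I_n − (A − BK)ᵀ)^{−1}Qθ and β = P^{−1}α. Let λ = (1/2)(Aθ − β)ᵀH(Aθ − β) and h(x) = (1/2)(x − β)ᵀP(x − β). Then for every x ∈ ℝ^n, the function u ↦ (1/2)(x − θ)ᵀQ(x − θ) + (1/2)uᵀRu + h(Ax + Bu) attains its minimum over u ∈ ℝ^m at u* = −Kx + K'β, and the minimum value equals λ + h(x); i.e., h and λ solve the Bellman equation h(x) + λ = min_u [(1/2)(x − θ)ᵀQ(x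 − θ) + (1/2)uᵀRu + h(Ax + Bu)] for all x. -/
/-!
Put `v = Ax − β` and `S = R + BᵀPB ≻ 0`. The part of the cost that depends on `u` is half of
`uᵀRu + (v + Bu)ᵀP(v + Bu) = vᵀPv + uᵀSu + 2uᵀBᵀPv`, so completing the square shows that it is
minimal exactly where `Su = −BᵀPv`, which `u* = −Kx + K'β` satisfies, with minimum `vᵀMv`.
It then remains to check `(x−θ)ᵀQ(x−θ) + (Ax−β)ᵀM(Ax−β) = 2λ + (x−β)ᵀP(x−β)` by expanding
around `θ`: the quadratic terms match because the Riccati equation says `AᵀMA = P − Q`, the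
linear terms because `AᵀM = (A − BK)ᵀP` and `Pβ = α` is a fixed point of `y ↦ (A − BK)ᵀy + Qθ`,
which give `AᵀM(Aθ − β) = P(θ − β)`, and the constant terms because `Q + AᵀMA = P` turns `H`
into `M − MAP⁻¹AᵀM`.
-/

open Matrix

namespace Matrix

variable {𝕜 ι κ : Type*} [Fintype ι] [Fintype κ]

section CommRing

variable [CommRing 𝕜]

lemma IsSymm.dotProduct_mulVec_comm {N : Matrix ι ι 𝕜} (hN : N.IsSymm) (x y : ι → 𝕜) :
    x ⬝ᵥ N *ᵥ y = y ⬝ᵥ N *ᵥ x := by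
  conv_lhs => rw [← hN.eq]
  exact dotProduct_transpose_mulVec N x y

lemma IsSymm.add_dotProduct_mulVec_add {N : Matrix ι ι 𝕜} (hN : N.IsSymm) (y z : ι → 𝕜) :
    (y + z) ⬝ᵥ N *ᵥ (y + z) = y ⬝ᵥ N *ᵥ y + 2 * (y ⬝ᵥ N *ᵥ z) + z ⬝ᵥ N *ᵥ z := by
  rw [mulVec_add, dotProduct_add, add_dotProduct, add_dotProduct, hN.dotProduct_mulVec_comm z y]
  ring

lemma mulVec_dotProduct_mulVec (A : Matrix ι κ 𝕜) (N : Matrix ι ι 𝕜) (x : κ → 𝕜)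
    (y : ι → 𝕜) : (A *ᵥ x) ⬝ᵥ N *ᵥ y = x ⬝ᵥ (Aᵀ * N) *ᵥ y := by
  rw [dotProduct_comm, ← dotProduct_transpose_mulVec, mulVec_mulVec]

lemma mulVec_dotProduct_mulVec_mulVec (A : Matrix ι κ 𝕜) (N : Matrix ι ι 𝕜) (x y : κ → 𝕜) :
    (A *ᵥ x) ⬝ᵥ N *ᵥ (A *ᵥ y) = x ⬝ᵥ (Aᵀ * N * A) *ᵥ y := by
  rw [mulVec_dotProduct_mulVec, mulVec_mulVec]

lemma IsSymm.dotProduct_sub_mul_mulVec {M : Matrix ι ι 𝕜} (hM : M.IsSymm) (A : Matrix ι κ 𝕜)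
    (N : Matrix κ κ 𝕜) (d : ι → 𝕜) :
    d ⬝ᵥ (M - M * A * N * Aᵀ * M) *ᵥ d
      = d ⬝ᵥ M *ᵥ d - ((Aᵀ * M) *ᵥ d) ⬝ᵥ N *ᵥ ((Aᵀ * M) *ᵥ d) := by
  rw [sub_mulVec, dotProduct_sub, mulVec_dotProduct_mulVec_mulVec, transpose_mul,
    transpose_transpose, hM.eq]
  simp only [Matrix.mul_assoc]

noncomputable def riccatiUpdate [DecidableEq κ] (P : Matrix ι ι 𝕜) (B : Matrix ι κ 𝕜)
    (T : Matrix κ κ 𝕜) : Matrix ι ι 𝕜 :=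
  P - P * B * T⁻¹ * Bᵀ * P

/-- Twice the control-dependent part `½uᵀRu + h(v + β + Bu)` of the Bellman right-hand side,
for the bias `h(y) = ½(y − β)ᵀP(y − β)`. -/
def lqStepCost (P : Matrix ι ι 𝕜) (R : Matrix κ κ 𝕜) (B : Matrix ι κ 𝕜) (v : ι → 𝕜)
    (u : κ → 𝕜) : 𝕜 :=
  u ⬝ᵥ R *ᵥ u + (v + B *ᵥ u) ⬝ᵥ P *ᵥ (v + B *ᵥ u)

variable {P : Matrix ι ι 𝕜}

lemma lqStepCost_eq (hP : P.IsSymm) (R : Matrix κ κ 𝕜) (B : Matrix ι κ 𝕜) (v : ι → 𝕜)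
    (u : κ → 𝕜) :
    lqStepCost P R B v u
      = v ⬝ᵥ P *ᵥ v + u ⬝ᵥ (R + Bᵀ * P * B) *ᵥ u + 2 * (u ⬝ᵥ (Bᵀ * P) *ᵥ v) := by
  have hcross : v ⬝ᵥ P *ᵥ (B *ᵥ u) = u ⬝ᵥ (Bᵀ * P) *ᵥ v := by
    rw [hP.dotProduct_mulVec_comm, mulVec_dotProduct_mulVec]
  rw [lqStepCost, hP.add_dotProduct_mulVec_add, hcross, mulVec_dotProduct_mulVec_mulVec,
    add_mulVec, dotProduct_add]
  ring

lemma lqStepCost_eq_of_mulVec_eq (hP : P.IsSymm) {R : Matrix κ κ 𝕜} {B : Matrix ι κ 𝕜}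
    {v : ι → 𝕜} {u₀ : κ → 𝕜} (h₀ : (R + Bᵀ * P * B) *ᵥ u₀ = -((Bᵀ * P) *ᵥ v)) (u : κ → 𝕜) :
    lqStepCost P R B v u
      = v ⬝ᵥ P *ᵥ v + u ⬝ᵥ (R + Bᵀ * P * B) *ᵥ u - 2 * (u ⬝ᵥ (R + Bᵀ * P * B) *ᵥ u₀) := by
  rw [lqStepCost_eq hP, h₀, dotProduct_neg]
  ring

lemma tracking_value_identity {A Q M : Matrix ι ι 𝕜} {θ β : ι → 𝕜} (hP : P.IsSymm)
    (hM : M.IsSymm) (hAMA : Aᵀ * M * A = P - Q)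
    (hAMd : (Aᵀ * M) *ᵥ (A *ᵥ θ - β) = P *ᵥ (θ - β)) (x : ι → 𝕜) :
    (x - θ) ⬝ᵥ Q *ᵥ (x - θ) + (A *ᵥ x - β) ⬝ᵥ M *ᵥ (A *ᵥ x - β)
      = (A *ᵥ θ - β) ⬝ᵥ M *ᵥ (A *ᵥ θ - β) - (θ - β) ⬝ᵥ P *ᵥ (θ - β)
        + (x - β) ⬝ᵥ P *ᵥ (x - β) := by
  have hAx : A *ᵥ x - β = A *ᵥ (x - θ) + (A *ᵥ θ - β) := by rw [mulVec_sub]; abel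
  have hx : x - β = (x - θ) + (θ - β) := by abel
  rw [hAx, hx, hM.add_dotProduct_mulVec_add, hP.add_dotProduct_mulVec_add,
    mulVec_dotProduct_mulVec_mulVec, hAMA, mulVec_dotProduct_mulVec, hAMd, sub_mulVec,
    dotProduct_sub]
  ring

lemma tracking_offset_mulVec [DecidableEq ι] {A Q M L : Matrix ι ι 𝕜} {θ β : ι → 𝕜}
    (hclosed : Aᵀ * M = Lᵀ * P) (hAMA : Aᵀ * M * A = P - Q)
    (hfix : (1 - Lᵀ) *ᵥ (P *ᵥ β) = Q *ᵥ θ) :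
    (Aᵀ * M) *ᵥ (A *ᵥ θ - β) = P *ᵥ (θ - β) := by
  have hAMβ : (Aᵀ * M) *ᵥ β = P *ᵥ β - Q *ᵥ θ := by
    rw [hclosed, ← mulVec_mulVec, ← hfix, sub_mulVec, one_mulVec]
    abel
  rw [mulVec_sub, mulVec_mulVec, hAMA, hAMβ, sub_mulVec, mulVec_sub]
  abel

section Riccati

variable [DecidableEq κ] {T : Matrix κ κ 𝕜}

lemma IsSymm.riccatiUpdate (hP : P.IsSymm) (hT : T.IsSymm) (B : Matrix ι κ 𝕜) :
    (riccatiUpdate P B T).IsSymm := by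
  simp only [Matrix.riccatiUpdate, IsSymm, transpose_sub, transpose_mul, transpose_transpose,
    hP.eq, transpose_nonsing_inv, hT.eq, Matrix.mul_assoc]

lemma transpose_mul_riccatiUpdate (hP : P.IsSymm) (hT : T.IsSymm) (A : Matrix ι ι 𝕜)
    (B : Matrix ι κ 𝕜) :
    Aᵀ * riccatiUpdate P B T = (A - B * (T⁻¹ * Bᵀ * P * A))ᵀ * P := by
  simp only [Matrix.riccatiUpdate, transpose_sub, transpose_mul, transpose_transpose, hP.eq,
    transpose_nonsing_inv, hT.eq, Matrix.mul_sub, Matrix.sub_mul, Matrix.mul_assoc]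

lemma lqStepCost_eq_riccatiUpdate (hP : P.IsSymm) {R : Matrix κ κ 𝕜} {B : Matrix ι κ 𝕜}
    (hS : IsUnit (R + Bᵀ * P * B).det) {v : ι → 𝕜} {u₀ : κ → 𝕜}
    (h₀ : (R + Bᵀ * P * B) *ᵥ u₀ = -((Bᵀ * P) *ᵥ v)) :
    lqStepCost P R B v u₀ = v ⬝ᵥ riccatiUpdate P B (R + Bᵀ * P * B) *ᵥ v := by
  set S := R + Bᵀ * P * B
  have hu₀ : u₀ = -(S⁻¹ *ᵥ ((Bᵀ * P) *ᵥ v)) := by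
    rw [← mulVec_neg, ← h₀, mulVec_mulVec, nonsing_inv_mul _ hS, one_mulVec]
  have hgain : (Bᵀ * P)ᵀ * S⁻¹ * (Bᵀ * P) = P * B * S⁻¹ * Bᵀ * P := by
    simp only [transpose_mul, transpose_transpose, hP.eq, Matrix.mul_assoc]
  rw [lqStepCost_eq_of_mulVec_eq hP h₀, h₀, dotProduct_neg, hu₀, neg_dotProduct,
    dotProduct_comm (S⁻¹ *ᵥ _), mulVec_dotProduct_mulVec_mulVec, hgain, riccatiUpdate,
    sub_mulVec, dotProduct_sub]
  ring

end Riccati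

end CommRing

section Real

lemma PosSemidef.two_mul_dotProduct_mulVec_sub_le {S : Matrix κ κ ℝ} (hS : S.PosSemidef)
    (u w : κ → ℝ) : 2 * (u ⬝ᵥ S *ᵥ w) - w ⬝ᵥ S *ᵥ w ≤ u ⬝ᵥ S *ᵥ u := by
  have hsq := hS.dotProduct_mulVec_nonneg (u - w)
  rw [star_trivial, sub_eq_add_neg,
    (isHermitian_iff_isSymm.mp hS.isHermitian).add_dotProduct_mulVec_add, mulVec_neg,
    dotProduct_neg, neg_dotProduct, dotProduct_neg] at hsq
  linarith

lemma PosDef.add_transpose_mul_mul {R : Matrix κ κ ℝ} (hR : R.PosDef) {P : Matrix ι ι ℝ}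
    (hP : P.PosSemidef) (B : Matrix ι κ ℝ) : (R + Bᵀ * P * B).PosDef :=
  hR.add_posSemidef (by simpa using hP.conjTranspose_mul_mul_same B)

lemma lqStepCost_le_of_mulVec_eq {P : Matrix ι ι ℝ} (hP : P.IsSymm) {R : Matrix κ κ ℝ}
    {B : Matrix ι κ ℝ} (hS : (R + Bᵀ * P * B).PosSemidef) {v : ι → ℝ} {u₀ : κ → ℝ}
    (h₀ : (R + Bᵀ * P * B) *ᵥ u₀ = -((Bᵀ * P) *ᵥ v)) (u : κ → ℝ) :
    lqStepCost P R B v u₀ ≤ lqStepCost P R B v u := by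
  rw [lqStepCost_eq_of_mulVec_eq hP h₀, lqStepCost_eq_of_mulVec_eq hP h₀]
  linarith [hS.two_mul_dotProduct_mulVec_sub_le u u₀]

end Real

end Matrix

theorem stmt_8_general {n m : ℕ}
    (A : Matrix (Fin n) (Fin n) ℝ) (B : Matrix (Fin n) (Fin m) ℝ)
    (Q P M H : Matrix (Fin n) (Fin n) ℝ) (R : Matrix (Fin m) (Fin m) ℝ)
    (K K' : Matrix (Fin m) (Fin n) ℝ)
    (θ α β : Fin n → ℝ) (lam : ℝ) (h : (Fin n → ℝ) → ℝ)
    (hR : R.PosDef) (hP : P.PosDef)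
    (hDARE : P = Q + Aᵀ * (P - P * B * (R + Bᵀ * P * B)⁻¹ * Bᵀ * P) * A)
    (hM : M = P - P * B * (R + Bᵀ * P * B)⁻¹ * Bᵀ * P)
    (hH : H = M - M * A * (Q + Aᵀ * M * A)⁻¹ * Aᵀ * M)
    (hK : K = (R + Bᵀ * P * B)⁻¹ * Bᵀ * P * A)
    (hK' : K' = (R + Bᵀ * P * B)⁻¹ * Bᵀ * P)
    (hinv : IsUnit (1 - (A - B * K)ᵀ))
    (hα : α = (1 - (A - B * K)ᵀ)⁻¹.mulVec (Q.mulVec θ))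
    (hβ : β = P⁻¹.mulVec α)
    (hlam : lam = (1 / 2) * ((A.mulVec θ - β) ⬝ᵥ H.mulVec (A.mulVec θ - β)))
    (hh : ∀ x : Fin n → ℝ, h x = (1 / 2) * ((x - β) ⬝ᵥ P.mulVec (x - β))) :
    ∀ x : Fin n → ℝ,
      (∀ u : Fin m → ℝ,
        (1 / 2) * ((x - θ) ⬝ᵥ Q.mulVec (x - θ))
            + (1 / 2) * ((-(K.mulVec x) + K'.mulVec β) ⬝ᵥ
                R.mulVec (-(K.mulVec x) + K'.mulVec β))
            + h (A.mulVec x + B.mulVec (-(K.mulVec x) + K'.mulVec β))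
          ≤ (1 / 2) * ((x - θ) ⬝ᵥ Q.mulVec (x - θ)) + (1 / 2) * (u ⬝ᵥ R.mulVec u)
            + h (A.mulVec x + B.mulVec u)) ∧
      (1 / 2) * ((x - θ) ⬝ᵥ Q.mulVec (x - θ))
          + (1 / 2) * ((-(K.mulVec x) + K'.mulVec β) ⬝ᵥ
              R.mulVec (-(K.mulVec x) + K'.mulVec β))
          + h (A.mulVec x + B.mulVec (-(K.mulVec x) + K'.mulVec β))
        = lam + h x := by
  intro x
  have hPs : P.IsSymm := isHermitian_iff_isSymm.mp hP.isHermitian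
  have hPdet : IsUnit P.det := (isUnit_iff_isUnit_det _).mp hP.isUnit
  have hS := hR.add_transpose_mul_mul hP.posSemidef B
  have hSs : (R + Bᵀ * P * B).IsSymm := isHermitian_iff_isSymm.mp hS.isHermitian
  have hSdet : IsUnit (R + Bᵀ * P * B).det := (isUnit_iff_isUnit_det _).mp hS.isUnit
  change M = riccatiUpdate P B (R + Bᵀ * P * B) at hM
  have hMs : M.IsSymm := hM ▸ hPs.riccatiUpdate hSs B
  have hAMA : Aᵀ * M * A = P - Q := by rw [hM, eq_sub_iff_add_eq']; exact hDARE.symm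
  have hclosed : Aᵀ * M = (A - B * K)ᵀ * P := by
    rw [hM, hK, transpose_mul_riccatiUpdate hPs hSs]
  have hfix : (1 - (A - B * K)ᵀ) *ᵥ (P *ᵥ β) = Q *ᵥ θ := by
    rw [hβ, mulVec_mulVec _ P, mul_nonsing_inv _ hPdet, one_mulVec, hα, mulVec_mulVec,
      mul_nonsing_inv _ ((isUnit_iff_isUnit_det _).mp hinv), one_mulVec]
  have hAMd := tracking_offset_mulVec hclosed hAMA hfix
  have hlam' : 2 * lam = (A *ᵥ θ - β) ⬝ᵥ M *ᵥ (A *ᵥ θ - β) - (θ - β) ⬝ᵥ P *ᵥ (θ - β) := by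
    rw [hlam, hH, show Q + Aᵀ * M * A = P by rw [hAMA]; abel, hMs.dotProduct_sub_mul_mulVec,
      hAMd, mulVec_mulVec, nonsing_inv_mul _ hPdet, one_mulVec, dotProduct_comm (P *ᵥ _)]
    ring
  set u₀ := -(K *ᵥ x) + K' *ᵥ β with hu₀
  have hopt : (R + Bᵀ * P * B) *ᵥ u₀ = -((Bᵀ * P) *ᵥ (A *ᵥ x - β)) := by
    rw [show u₀ = -(K' *ᵥ (A *ᵥ x - β)) by rw [hu₀, hK, ← hK', ← mulVec_mulVec, mulVec_sub]; abel,
      mulVec_neg, mulVec_mulVec, hK', Matrix.mul_assoc _ Bᵀ P,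
      mul_nonsing_inv_cancel_left _ _ hSdet]
  have hcost : ∀ u, (1 / 2) * (u ⬝ᵥ R *ᵥ u) + h (A *ᵥ x + B *ᵥ u)
      = (1 / 2) * lqStepCost P R B (A *ᵥ x - β) u := by
    intro u
    rw [hh, lqStepCost, show A *ᵥ x + B *ᵥ u - β = A *ᵥ x - β + B *ᵥ u by abel]
    ring
  have hmin := lqStepCost_eq_riccatiUpdate hPs hSdet hopt
  rw [← hM] at hmin
  refine ⟨fun u => ?_, ?_⟩
  · linarith [hcost u, hcost u₀, lqStepCost_le_of_mulVec_eq hPs hS.posSemidef hopt u]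
  · linarith [hcost u₀, tracking_value_identity hPs hMs hAMA hAMd x, hh x]

/-- Verification part of Proposition 1: the quadratic bias function
`h(x) = ½(x−β)ᵀP(x−β)` and constant `λ = ½(Aθ−β)ᵀH(Aθ−β)` solve the average-cost Bellman
equation for the LQ tracking stage cost, the minimizing control being `u* = −Kx + K'β`. -/
theorem stmt_8 {n m : ℕ}
    (A : Matrix (Fin n) (Fin n) ℝ) (B : Matrix (Fin n) (Fin m) ℝ)
    (Q P M H : Matrix (Fin n) (Fin n) ℝ) (R : Matrix (Fin m) (Fin m) ℝ)
    (K K' : Matrix (Fin m) (Fin n) ℝ)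
    (θ α β : Fin n → ℝ) (lam : ℝ) (h : (Fin n → ℝ) → ℝ)
    (hQ : Q.PosDef) (hR : R.PosDef) (hP : P.PosDef)
    (hDARE : P = Q + Aᵀ * (P - P * B * (R + Bᵀ * P * B)⁻¹ * Bᵀ * P) * A)
    (hM : M = P - P * B * (R + Bᵀ * P * B)⁻¹ * Bᵀ * P)
    (hH : H = M - M * A * (Q + Aᵀ * M * A)⁻¹ * Aᵀ * M)
    (hK : K = (R + Bᵀ * P * B)⁻¹ * Bᵀ * P * A)
    (hK' : K' = (R + Bᵀ * P * B)⁻¹ * Bᵀ * P)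
    (hinv : IsUnit (1 - (A - B * K)ᵀ))
    (hα : α = (1 - (A - B * K)ᵀ)⁻¹.mulVec (Q.mulVec θ))
    (hβ : β = P⁻¹.mulVec α)
    (hlam : lam = (1 / 2) * ((A.mulVec θ - β) ⬝ᵥ H.mulVec (A.mulVec θ - β)))
    (hh : ∀ x : Fin n → ℝ, h x = (1 / 2) * ((x - β) ⬝ᵥ P.mulVec (x - β))) :
    ∀ x : Fin n → ℝ,
      (∀ u : Fin m → ℝ,
        (1 / 2) * ((x - θ) ⬝ᵥ Q.mulVec (x - θ))
            + (1 / 2) * ((-(K.mulVec x) + K'.mulVec β) ⬝ᵥ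
                R.mulVec (-(K.mulVec x) + K'.mulVec β))
            + h (A.mulVec x + B.mulVec (-(K.mulVec x) + K'.mulVec β))
          ≤ (1 / 2) * ((x - θ) ⬝ᵥ Q.mulVec (x - θ)) + (1 / 2) * (u ⬝ᵥ R.mulVec u)
            + h (A.mulVec x + B.mulVec u)) ∧
      (1 / 2) * ((x - θ) ⬝ᵥ Q.mulVec (x - θ))
          + (1 / 2) * ((-(K.mulVec x) + K'.mulVec β) ⬝ᵥ
              R.mulVec (-(K.mulVec x) + K'.mulVec β))
          + h (A.mulVec x + B.mulVec (-(K.mulVec x) + K'.mulVec β))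
        = lam + h x :=
  stmt_8_general A B Q P M H R K K' θ α β lam h hR hP hDARE hM hH hK hK' hinv hα hβ hlam hh
end

section
/- Let A ∈ ℝ^{n×n}, B ∈ ℝ^{n×m}. Let Q̲, Q̄ ∈ ℝ^{n×n} and R̲, R̄ ∈ ℝ^{m×m} be symmetric positive definite with Q̲ ⪯ Q̄ and R̲ ⪯ R̄. Suppose P̲ and P̄ are symmetric positive-definite solutions of the discrete-time algebraic Riccati equations P = Q̲ + Aᵀ(P − PB(R̲ + BᵀPB)^{−1}BᵀP)A and P = Q̄ + Aᵀ(P − PB(R̄ + BᵀPB)^{−1}BᵀP)A respectively. Let N ≥ 1, let Q_t (0 ≤ t ≤ N−1) and R_t (0 ≤ t ≤ N−1) be symmetric matrices with Q̲ ⪯ Q_t ⪯ Q̄ and R̲ ⪯ R_t ⪯ R̄, let P_N be symmetric with P̲ ⪯ P_N ⪯ P̄, and define backward the Riccati recursion P_t = Q_t + Aᵀ(P_{t+1} − P_{t+1}B(R_t + BᵀP_{t+1}B)^{−1}BᵀP_{t+1})A for t = N−1, …, 0. Then P̲ ⪯ P_t ⪯ P̄ for all 0 ≤ t ≤ N. 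-/
/-!
By completing the square, the Riccati map `P ↦ Q + Aᵀ(P - PB(R + BᵀPB)⁻¹BᵀP)A` is the least,
in the Loewner order, of the one-step LQR costs `Q + KᵀRK + (A - BK)ᵀP(A - BK)` over all gains
`K`, attained at `K = (R + BᵀPB)⁻¹BᵀPA`. Each of these costs is monotone in `(Q, R, P)`, hence
so is their minimum. Backward induction from `P_N`, comparing each step with the fixed points
`P̲` and `P̄`, keeps `P_t` between them.
-/

open Matrix
open scoped MatrixOrder

section Algebra

variable {ι κ 𝕜 : Type*} [Fintype ι] [Fintype κ] [DecidableEq κ] [CommRing 𝕜]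
  (A : Matrix ι ι 𝕜) (B : Matrix ι κ 𝕜) (Q : Matrix ι ι 𝕜) (R : Matrix κ κ 𝕜) (P : Matrix ι ι 𝕜)

noncomputable def riccati : Matrix ι ι 𝕜 :=
  Q + Aᵀ * (P - P * B * (R + Bᵀ * P * B)⁻¹ * Bᵀ * P) * A

noncomputable def riccatiGain : Matrix κ ι 𝕜 :=
  (R + Bᵀ * P * B)⁻¹ * Bᵀ * P * A

def lqrCost (K : Matrix κ ι 𝕜) : Matrix ι ι 𝕜 :=
  Q + Kᵀ * R * K + (A - B * K)ᵀ * P * (A - B * K)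

variable {A B Q R P}

theorem lqrCost_eq_riccati_add (hP : P.IsSymm) (hR : R.IsSymm)
    (hS : IsUnit (R + Bᵀ * P * B).det) (K : Matrix κ ι 𝕜) :
    lqrCost A B Q R P K = riccati A B Q R P +
      (K - riccatiGain A B R P)ᵀ * (R + Bᵀ * P * B) * (K - riccatiGain A B R P) := by
  set G := riccatiGain A B R P
  have hGain : (R + Bᵀ * P * B) * G = Bᵀ * P * A := by
    simp only [G, riccatiGain, ← Matrix.mul_assoc, mul_nonsing_inv _ hS, Matrix.one_mul]
  have hGain' : Gᵀ * (R + Bᵀ * P * B) = Aᵀ * P * B := by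
    simpa only [transpose_mul, transpose_add, transpose_transpose, hR.eq, hP.eq,
      Matrix.mul_assoc] using congrArg transpose hGain
  have hRiccati : riccati A B Q R P = Q + (Aᵀ * P * A - Aᵀ * P * B * G) := by
    simp only [riccati, G, riccatiGain, Matrix.mul_sub, Matrix.sub_mul, Matrix.mul_assoc]
  have hSquare : (K - G)ᵀ * (R + Bᵀ * P * B) * (K - G) =
      Kᵀ * (R + Bᵀ * P * B) * K - Kᵀ * (Bᵀ * P * A) - Aᵀ * P * B * K + Aᵀ * P * B * G := by
    rw [transpose_sub, Matrix.sub_mul, Matrix.sub_mul, Matrix.mul_sub, Matrix.mul_sub,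
      Matrix.mul_assoc Kᵀ _ G, hGain, hGain']
    abel
  rw [hRiccati, hSquare, lqrCost]
  simp only [transpose_sub, transpose_mul, Matrix.mul_add, Matrix.add_mul, Matrix.mul_sub,
    Matrix.sub_mul, Matrix.mul_assoc]
  abel

end Algebra

section Order

variable {ι κ : Type*} [Fintype ι] [Fintype κ]
  {A : Matrix ι ι ℝ} {B : Matrix ι κ ℝ}

theorem transpose_mul_mul_le_transpose_mul_mul {ι' : Type*} [Fintype ι']
    {X Y : Matrix ι' ι' ℝ} (h : X ≤ Y) (K : Matrix ι' ι ℝ) : Kᵀ * X * K ≤ Kᵀ * Y * K := by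
  rw [le_iff, ← Matrix.sub_mul, ← Matrix.mul_sub, ← conjTranspose_eq_transpose_of_trivial]
  exact (le_iff.mp h).conjTranspose_mul_mul_same K

theorem posDef_add_transpose_mul_mul {R : Matrix κ κ ℝ} {P : Matrix ι ι ℝ} (hR : R.PosDef)
    (hP : 0 ≤ P) : (R + Bᵀ * P * B).PosDef :=
  hR.add_posSemidef (by simpa using le_iff.mp (transpose_mul_mul_le_transpose_mul_mul hP B))

theorem lqrCost_riccatiGain [DecidableEq κ] (Q : Matrix ι ι ℝ) {R : Matrix κ κ ℝ} {P : Matrix ι ι ℝ}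
    (hR : R.PosDef) (hP : 0 ≤ P) :
    lqrCost A B Q R P (riccatiGain A B R P) = riccati A B Q R P := by
  have hS := posDef_add_transpose_mul_mul (B := B) hR hP
  rw [lqrCost_eq_riccati_add (isHermitian_iff_isSymm.mp hP.posSemidef.isHermitian)
    (isHermitian_iff_isSymm.mp hR.isHermitian) hS.det_pos.ne'.isUnit]
  simp

theorem riccati_le_lqrCost [DecidableEq κ] (Q : Matrix ι ι ℝ) {R : Matrix κ κ ℝ} {P : Matrix ι ι ℝ}
    (hR : R.PosDef) (hP : 0 ≤ P) (K : Matrix κ ι ℝ) :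
    riccati A B Q R P ≤ lqrCost A B Q R P K := by
  have hS := posDef_add_transpose_mul_mul (B := B) hR hP
  rw [lqrCost_eq_riccati_add (isHermitian_iff_isSymm.mp hP.posSemidef.isHermitian)
    (isHermitian_iff_isSymm.mp hR.isHermitian) hS.det_pos.ne'.isUnit]
  exact le_add_of_nonneg_right (by simpa only [Matrix.mul_zero, Matrix.zero_mul] using
    transpose_mul_mul_le_transpose_mul_mul hS.posSemidef.nonneg (K - riccatiGain A B R P))

theorem lqrCost_mono {Q₁ Q₂ P₁ P₂ : Matrix ι ι ℝ} {R₁ R₂ : Matrix κ κ ℝ}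
    (hQ : Q₁ ≤ Q₂) (hR : R₁ ≤ R₂) (hP : P₁ ≤ P₂) (K : Matrix κ ι ℝ) :
    lqrCost A B Q₁ R₁ P₁ K ≤ lqrCost A B Q₂ R₂ P₂ K :=
  add_le_add (add_le_add hQ (transpose_mul_mul_le_transpose_mul_mul hR K))
    (transpose_mul_mul_le_transpose_mul_mul hP _)

theorem riccati_mono [DecidableEq κ] {Q₁ Q₂ P₁ P₂ : Matrix ι ι ℝ} {R₁ R₂ : Matrix κ κ ℝ}
    (hP₁ : 0 ≤ P₁) (hR₁ : R₁.PosDef) (hQ : Q₁ ≤ Q₂) (hR : R₁ ≤ R₂) (hP : P₁ ≤ P₂) :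
    riccati A B Q₁ R₁ P₁ ≤ riccati A B Q₂ R₂ P₂ := by
  have hR₂ : R₂.PosDef := by simpa using hR₁.add_posSemidef (le_iff.mp hR)
  calc riccati A B Q₁ R₁ P₁
      ≤ lqrCost A B Q₁ R₁ P₁ (riccatiGain A B R₂ P₂) := riccati_le_lqrCost Q₁ hR₁ hP₁ _
    _ ≤ lqrCost A B Q₂ R₂ P₂ (riccatiGain A B R₂ P₂) := lqrCost_mono hQ hR hP _
    _ = riccati A B Q₂ R₂ P₂ := lqrCost_riccatiGain Q₂ hR₂ (hP₁.trans hP)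

end Order

theorem stmt_11_general {n m : ℕ} (A : Matrix (Fin n) (Fin n) ℝ) (B : Matrix (Fin n) (Fin m) ℝ)
    (Qlo Qhi Plo Phi : Matrix (Fin n) (Fin n) ℝ) (Rlo Rhi : Matrix (Fin m) (Fin m) ℝ)
    (hRlo : Rlo.PosDef)
    (hPlo : Plo.PosDef)
    (hPloEq : Plo = Qlo + Aᵀ * (Plo - Plo * B * (Rlo + Bᵀ * Plo * B)⁻¹ * Bᵀ * Plo) * A)
    (hPhiEq : Phi = Qhi + Aᵀ * (Phi - Phi * B * (Rhi + Bᵀ * Phi * B)⁻¹ * Bᵀ * Phi) * A)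
    (N : ℕ)
    (Q : ℕ → Matrix (Fin n) (Fin n) ℝ) (R : ℕ → Matrix (Fin m) (Fin m) ℝ)
    (hQlo' : ∀ t < N, (Q t - Qlo).PosSemidef) (hQhi' : ∀ t < N, (Qhi - Q t).PosSemidef)
    (hRlo' : ∀ t < N, (R t - Rlo).PosSemidef) (hRhi' : ∀ t < N, (Rhi - R t).PosSemidef)
    (P : ℕ → Matrix (Fin n) (Fin n) ℝ)
    (hPNlo : (P N - Plo).PosSemidef) (hPNhi : (Phi - P N).PosSemidef)
    (hPrec : ∀ t < N, P t = Q t +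
      Aᵀ * (P (t + 1) - P (t + 1) * B * (R t + Bᵀ * P (t + 1) * B)⁻¹ * Bᵀ * P (t + 1)) * A) :
    ∀ t ≤ N, (P t - Plo).PosSemidef ∧ (Phi - P t).PosSemidef := by
  intro t ht
  induction ht using Nat.decreasingInduction with
  | self => exact ⟨hPNlo, hPNhi⟩
  | of_succ t htN ih =>
    obtain ⟨hlo, hhi⟩ : Plo ≤ P (t + 1) ∧ P (t + 1) ≤ Phi := ih
    have hPlo₀ : 0 ≤ Plo := hPlo.posSemidef.nonneg
    have hRt : (R t).PosDef := by simpa using hRlo.add_posSemidef (hRlo' t htN)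
    have hPt : P t = riccati A B (Q t) (R t) (P (t + 1)) := hPrec t htN
    refine ⟨?_, ?_⟩
    · calc Plo = riccati A B Qlo Rlo Plo := hPloEq
        _ ≤ P t := hPt ▸ riccati_mono hPlo₀ hRlo (hQlo' t htN) (hRlo' t htN) hlo
    · calc P t ≤ riccati A B Qhi Rhi Phi :=
            hPt ▸ riccati_mono (hPlo₀.trans hlo) hRt (hQhi' t htN) (hRhi' t htN) hhi
        _ = Phi := hPhiEq.symm

/-- "Bounded `P_t`" Lemma (Appendix G): if the time-varying cost matrices are sandwiched,
`Q̲ ⪯ Q_t ⪯ Q̄`, `R̲ ⪯ R_t ⪯ R̄`, the terminal matrix satisfies `P̲ ⪯ P_N ⪯ P̄` where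
`P̲, P̄` solve the respective algebraic Riccati equations, then the whole backward Riccati
recursion stays sandwiched: `P̲ ⪯ P_t ⪯ P̄` for all `t ≤ N`. -/
theorem stmt_11 {n m : ℕ} (A : Matrix (Fin n) (Fin n) ℝ) (B : Matrix (Fin n) (Fin m) ℝ)
    (Qlo Qhi Plo Phi : Matrix (Fin n) (Fin n) ℝ) (Rlo Rhi : Matrix (Fin m) (Fin m) ℝ)
    (hQlo : Qlo.PosDef) (hQhi : Qhi.PosDef) (hRlo : Rlo.PosDef) (hRhi : Rhi.PosDef)
    (hQle : (Qhi - Qlo).PosSemidef) (hRle : (Rhi - Rlo).PosSemidef)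
    (hPlo : Plo.PosDef) (hPhi : Phi.PosDef)
    (hPloEq : Plo = Qlo + Aᵀ * (Plo - Plo * B * (Rlo + Bᵀ * Plo * B)⁻¹ * Bᵀ * Plo) * A)
    (hPhiEq : Phi = Qhi + Aᵀ * (Phi - Phi * B * (Rhi + Bᵀ * Phi * B)⁻¹ * Bᵀ * Phi) * A)
    (N : ℕ) (hN : 1 ≤ N)
    (Q : ℕ → Matrix (Fin n) (Fin n) ℝ) (R : ℕ → Matrix (Fin m) (Fin m) ℝ)
    (hQsymm : ∀ t < N, (Q t).IsSymm) (hRsymm : ∀ t < N, (R t).IsSymm)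
    (hQlo' : ∀ t < N, (Q t - Qlo).PosSemidef) (hQhi' : ∀ t < N, (Qhi - Q t).PosSemidef)
    (hRlo' : ∀ t < N, (R t - Rlo).PosSemidef) (hRhi' : ∀ t < N, (Rhi - R t).PosSemidef)
    (P : ℕ → Matrix (Fin n) (Fin n) ℝ)
    (hPNsymm : (P N).IsSymm)
    (hPNlo : (P N - Plo).PosSemidef) (hPNhi : (Phi - P N).PosSemidef)
    (hPrec : ∀ t < N, P t = Q t +
      Aᵀ * (P (t + 1) - P (t + 1) * B * (R t + Bᵀ * P (t + 1) * B)⁻¹ * Bᵀ * P (t + 1)) * A) :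
    ∀ t ≤ N, (P t - Plo).PosSemidef ∧ (Phi - P t).PosSemidef :=
  stmt_11_general A B Qlo Qhi Plo Phi Rlo Rhi hRlo hPlo hPloEq hPhiEq N Q R hQlo' hQhi' hRlo' hRhi'
    P hPNlo hPNhi hPrec
end
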